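/- arXiv:1704.07112 — 6 statements merged into one kernel-verified Lean document; each statement's English description precedes it below -/
import Mathlib

section
/- If D = (d_1,...,d_n) and F = (f_1,...,f_n) are tree degree sequences with d_i + f_i ≥ 3 for all i, then the sequence D + F = (d_1+f_1,...,d_n+f_n) is graphical. -/
/-!
Write `c = D + F`. Then `c ≥ 3` and `∑ c = 4n - 4`, and every such sequence is graphical, by
induction on `n`. For `n = 4` the sequence is constantly 3, realized by `K₄`. For `n ≥ 5` the
average of `c` lies strictly between 3 and 4, so `c v = 3` and `c z ≥ 4` for some `v`, `z`.
Deleting `v` and lowering `c z` by one gives a sequence of the same kind on `n - 1` vertices. In a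
realization of it some vertex `a ≠ z` has a neighbour `b ≠ z`, and replacing the edge `ab` by a new
vertex `v` joined to `a`, `b`, `z` realizes `c`.
-/

/-- `G` realizes the degree sequence `d`: vertex `v` has degree `d v`. -/
def realizes {n : ℕ} (G : SimpleGraph (Fin n)) (d : Fin n → ℕ) : Prop :=
  ∀ v, {u | G.Adj v u}.ncard = d v

/-- A tree degree sequence: positive entries summing to `2n - 2`. -/
def isTreeSeq {n : ℕ} (d : Fin n → ℕ) : Prop :=
  (∀ i, 1 ≤ d i) ∧ (∑ i, d i) = 2 * n - 2

/-- A caterpillar: a tree whose non-leaf vertices span a path. -/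
def isCaterpillar {n : ℕ} (T : SimpleGraph (Fin n)) : Prop :=
  T.IsTree ∧ ∃ p : List (Fin n), p.Nodup ∧ p.Chain' T.Adj ∧
    ∀ v, (1 < {u | T.Adj v u}.ncard ↔ v ∈ p)

def IsGraphical {V : Type*} (c : V → ℕ) : Prop :=
  ∃ G : SimpleGraph V, ∀ v, (G.neighborSet v).ncard = c v

lemma IsGraphical.of_comp_equiv {V W : Type*} (e : V ≃ W) {c : W → ℕ}
    (h : IsGraphical (c ∘ e)) : IsGraphical c := by
  obtain ⟨G, hG⟩ := h
  refine ⟨G.comap e.symm, fun w => ?_⟩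
  have : (G.comap e.symm).neighborSet w = e '' G.neighborSet (e.symm w) := by
    ext u; simp [e.image_eq_preimage_symm]
  rw [this, Set.ncard_image_of_injective _ e.injective, hG]
  simp

lemma isGraphical_card_sub_one (V : Type*) [Fintype V] :
    IsGraphical fun _ : V => Fintype.card V - 1 :=
  ⟨⊤, fun v => by
    rw [SimpleGraph.neighborSet_top, Set.ncard_compl, Set.ncard_singleton,
      Nat.card_eq_fintype_card]⟩

namespace SimpleGraph

variable {W : Type*} (G : SimpleGraph W) (x y z : W)

/-- `G` with the edge `xy` subdivided by the new vertex `none`, which is also joined to `z`. -/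
def subdivideJoin : SimpleGraph (Option W) where
  Adj
    | none, none => False
    | none, some b => b = x ∨ b = y ∨ b = z
    | some a, none => a = x ∨ a = y ∨ a = z
    | some a, some b => G.Adj a b ∧ s(a, b) ≠ s(x, y)
  symm := ⟨by
    rintro (_ | a) (_ | b) h
    exacts [h, h, h, ⟨h.1.symm, by rw [Sym2.eq_swap]; exact h.2⟩]⟩
  loopless := ⟨by
    rintro (_ | a) h
    exacts [h, G.irrefl h.1]⟩

lemma subdivideJoin_comm : G.subdivideJoin x y z = G.subdivideJoin y x z := by
  ext (_ | a) (_ | b) <;> simp [subdivideJoin, Sym2.eq_swap, or_left_comm]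

lemma neighborSet_subdivideJoin_none :
    (G.subdivideJoin x y z).neighborSet none = some '' {x, y, z} := by
  ext (_ | b) <;> simp [subdivideJoin]

lemma ncard_neighborSet_subdivideJoin_none (hxy : x ≠ y) (hxz : x ≠ z) (hyz : y ≠ z) :
    ((G.subdivideJoin x y z).neighborSet none).ncard = 3 := by
  rw [neighborSet_subdivideJoin_none, Set.ncard_image_of_injective _ (Option.some_injective W),
    Set.ncard_eq_three]
  exact ⟨x, y, z, hxy, hxz, hyz, rfl⟩

lemma neighborSet_subdivideJoin_some_left :
    (G.subdivideJoin x y z).neighborSet (some x) =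
      insert none (some '' (G.neighborSet x \ {y})) := by
  ext (_ | b)
  · simp [subdivideJoin]
  · simp only [subdivideJoin, mem_neighborSet, ne_eq, Sym2.congr_right]
    simp

lemma ncard_neighborSet_subdivideJoin_some_left [Finite W] (hxy : G.Adj x y) :
    ((G.subdivideJoin x y z).neighborSet (some x)).ncard = (G.neighborSet x).ncard := by
  rw [neighborSet_subdivideJoin_some_left, Set.ncard_insert_of_notMem (by simp),
    Set.ncard_image_of_injective _ (Option.some_injective W),
    Set.ncard_sdiff_singleton_add_one (s := G.neighborSet x) hxy]

lemma neighborSet_subdivideJoin_some_self (hzx : z ≠ x) (hzy : z ≠ y) :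
    (G.subdivideJoin x y z).neighborSet (some z) = insert none (some '' G.neighborSet z) := by
  ext (_ | b) <;> simp [subdivideJoin, hzx, hzy]

lemma neighborSet_subdivideJoin_some_of_ne {w : W} (hwx : w ≠ x) (hwy : w ≠ y) (hwz : w ≠ z) :
    (G.subdivideJoin x y z).neighborSet (some w) = some '' G.neighborSet w := by
  ext (_ | b) <;> simp [subdivideJoin, hwx, hwy, hwz]

lemma ncard_neighborSet_subdivideJoin_some [Finite W] [DecidableEq W] (hxy : G.Adj x y)
    (hxz : x ≠ z) (hyz : y ≠ z) (w : W) :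
    ((G.subdivideJoin x y z).neighborSet (some w)).ncard =
      (G.neighborSet w).ncard + if w = z then 1 else 0 := by
  by_cases hwx : w = x
  · subst hwx
    simp [ncard_neighborSet_subdivideJoin_some_left _ _ _ _ hxy, hxz]
  by_cases hwy : w = y
  · subst hwy
    rw [subdivideJoin_comm]
    simp [ncard_neighborSet_subdivideJoin_some_left _ _ _ _ hxy.symm, hyz]
  have hinj := Option.some_injective W
  by_cases hwz : w = z
  · subst hwz
    rw [neighborSet_subdivideJoin_some_self _ _ _ _ hwx hwy, Set.ncard_insert_of_notMem (by simp),
      Set.ncard_image_of_injective _ hinj, if_pos rfl]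
  · rw [neighborSet_subdivideJoin_some_of_ne _ _ _ _ hwx hwy hwz,
      Set.ncard_image_of_injective _ hinj, if_neg hwz, add_zero]

end SimpleGraph

open SimpleGraph in
lemma IsGraphical.option {W : Type*} [Finite W] [DecidableEq W] {c : W → ℕ}
    (hc : IsGraphical c) {a z : W} (haz : a ≠ z) (ha : 2 ≤ c a) :
    IsGraphical fun o : Option W => o.elim 3 fun w => c w + if w = z then 1 else 0 := by
  obtain ⟨G, hG⟩ := hc
  obtain ⟨b, hab, hbz⟩ : ∃ b, G.Adj a b ∧ b ≠ z := by
    by_contra! h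
    have : (G.neighborSet a).ncard ≤ ({z} : Set W).ncard := Set.ncard_le_ncard h
    rw [hG, Set.ncard_singleton] at this
    omega
  refine ⟨G.subdivideJoin a b z, ?_⟩
  rintro (_ | w)
  · exact ncard_neighborSet_subdivideJoin_none G a b z (G.ne_of_adj hab) haz hbz
  · rw [ncard_neighborSet_subdivideJoin_some G a b z hab haz hbz, hG]
    rfl

lemma IsGraphical.of_subtype_ne {V : Type*} [Finite V] [DecidableEq V] {c : V → ℕ} {v z a : V}
    (hv : c v = 3) (hzv : z ≠ v) (hz : 1 ≤ c z) (hav : a ≠ v) (haz : a ≠ z) (ha : 2 ≤ c a)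
    (h : IsGraphical fun w : {w // w ≠ v} => c w - if (w : V) = z then 1 else 0) :
    IsGraphical c := by
  refine IsGraphical.of_comp_equiv (Equiv.optionSubtypeNe v) ?_
  convert h.option (a := ⟨a, hav⟩) (z := ⟨z, hzv⟩) (by simpa using haz) (by simp [haz]; omega)
    using 1
  funext o
  cases o with
  | none => simpa using hv
  | some w =>
    by_cases hw : (w : V) = z
    · simp [Subtype.ext_iff, hw]
      omega
    · simp [Subtype.ext_iff, hw]

lemma sum_subtype_ne_tsub_ite_add {V : Type*} [Fintype V] [DecidableEq V] (c : V → ℕ) {v z : V}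
    (hzv : z ≠ v) (hz : 1 ≤ c z) :
    ∑ w : {w // w ≠ v}, (c w - if (w : V) = z then 1 else 0) + 1 + c v = ∑ w, c w := by
  have hz' : z ∈ Finset.univ.erase v := by simpa using hzv
  rw [← Finset.sum_subtype (Finset.univ.erase v) (by simp)
      (fun w => c w - if w = z then 1 else 0),
    Finset.sum_tsub_distrib _ fun w _ => by split_ifs with h <;> [exact h ▸ hz; exact Nat.zero_le _],
    Finset.sum_ite_eq', if_pos hz', Nat.sub_add_cancel,
    Finset.sum_erase_add _ _ (Finset.mem_univ v)]
  exact (Finset.single_le_sum (fun _ _ => Nat.zero_le _) hz').trans' hz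

theorem isGraphical_of_three_le_of_sum_eq {V : Type*} [Fintype V] (c : V → ℕ)
    (h3 : ∀ v, 3 ≤ c v) (hsum : ∑ v, c v = 4 * Fintype.card V - 4) : IsGraphical c := by
  classical
  induction hn : Fintype.card V generalizing V with
  | zero =>
    have := Fintype.card_eq_zero_iff.mp hn
    exact ⟨⊥, fun v => isEmptyElim v⟩
  | succ n ih =>
    rw [hn] at hsum
    have hlow : ∑ _v : V, 3 ≤ ∑ v, c v := Finset.sum_le_sum fun v _ => h3 v
    simp only [Finset.sum_const, Finset.card_univ, hn, smul_eq_mul] at hlow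
    obtain ⟨v, -, hv⟩ := Finset.exists_lt_of_sum_lt (f := c) (g := fun _ => 4) (s := Finset.univ)
      (by simp [hn]; omega)
    replace hv : c v = 3 := by have := h3 v; omega
    rcases (show n + 1 = 4 ∨ 4 < n + 1 by omega) with h4 | h4lt
    · have hc : c = fun _ => Fintype.card V - 1 := by
        have hall := (Finset.sum_eq_sum_iff_of_le (s := Finset.univ) fun w _ => h3 w).mp
          (by simp [hn]; omega)
        funext w
        have := hall w (Finset.mem_univ w)
        omega
      exact hc ▸ isGraphical_card_sub_one V
    obtain ⟨z, -, hz⟩ := Finset.exists_lt_of_sum_lt (f := fun _ => 3) (g := c) (s := Finset.univ)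
      (by simp [hn]; omega)
    have hzv : z ≠ v := by rintro rfl; omega
    obtain ⟨a, -, hvza⟩ := Finset.exists_mem_notMem_of_card_lt_card (s := {v, z})
      (t := Finset.univ) ((Finset.card_le_two).trans_lt (by simp [hn]; omega))
    obtain ⟨hav, haz⟩ : a ≠ v ∧ a ≠ z := by simpa using hvza
    refine .of_subtype_ne hv hzv (by omega) hav haz (by have := h3 a; omega)
      (ih _ (fun w => ?_) ?_ ?_)
    · by_cases hw : (w : V) = z
      · simp [hw]; omega
      · simpa [hw] using h3 w
    · have := sum_subtype_ne_tsub_ite_add c hzv (by omega)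
      simp only [Fintype.card_subtype_compl, Fintype.card_unique, hn]
      omega
    · simp [hn]

theorem sum_graphical_of_no_common_leaves (n : ℕ) (D F : Fin n → ℕ)
    (hD : isTreeSeq D) (hF : isTreeSeq F) (h3 : ∀ i, 3 ≤ D i + F i) :
    ∃ G : SimpleGraph (Fin n), realizes G (fun i => D i + F i) := by
  refine isGraphical_of_three_le_of_sum_eq _ h3 ?_
  rw [Finset.sum_add_distrib, hD.2, hF.2, Fintype.card_fin]
  omega
end

section
/- The tree degree sequences D = F = (5,2,2,2,2,2,1,1,1,1,1) on 11 vertices have edge-disjoint tree realizations, but they do not have edge-disjoint realizations in which both trees are caterpillars. -/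
open SimpleGraph Finset

namespace SimpleGraph.IsAcyclic

variable {V : Type*} {G : SimpleGraph V}

theorem ncard_adj_mem_support_le_two [DecidableEq V] (hG : G.IsAcyclic)
    {u v a : V} {w : G.Walk u v} (hw : w.IsPath) (ha : a ∈ w.support) :
    {b | G.Adj a b ∧ b ∈ w.support}.ncard ≤ 2 := by
  have hsub : {b | G.Adj a b ∧ b ∈ w.support} ⊆
      {(w.takeUntil a ha).penultimate, (w.dropUntil a ha).snd} := by
    rintro b ⟨hab, hb⟩
    rw [← w.take_spec ha, Walk.mem_support_append_iff] at hb
    rcases hb with hb | hb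
    · exact Or.inl (hG.eq_penultimate_of_adj_end (hw.takeUntil ha) hab hb)
    · exact Or.inr (hG.eq_snd_of_adj_start (hw.dropUntil ha) hab hb)
  calc _ ≤ ({(w.takeUntil a ha).penultimate, (w.dropUntil a ha).snd} : Set V).ncard :=
        Set.ncard_le_ncard hsub (Set.toFinite _)
    _ ≤ 2 := (Set.ncard_insert_le _ _).trans (by rw [Set.ncard_singleton])

theorem ncard_adj_mem_le_two (hG : G.IsAcyclic) {p : List V}
    (hnd : p.Nodup) (hch : p.IsChain G.Adj) {a : V} (ha : a ∈ p) :
    {b | G.Adj a b ∧ b ∈ p}.ncard ≤ 2 := by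
  classical
  have hp : p ≠ [] := List.ne_nil_of_mem ha
  have hsupp := Walk.support_ofSupport hp hch
  rw [← hsupp] at ha hnd ⊢
  exact ncard_adj_mem_support_le_two hG (Walk.isPath_def _ |>.mpr hnd) ha

end SimpleGraph.IsAcyclic

section ParentGraph

variable {V : Type*}

/-- At a fixed point of `parent` (a root) `fromRel` discards the loop. -/
def parentGraph (parent : V → V) : SimpleGraph V :=
  SimpleGraph.fromRel fun u v => parent u = v

instance [DecidableEq V] (parent : V → V) : DecidableRel (parentGraph parent).Adj :=
  fun u v => inferInstanceAs (Decidable (u ≠ v ∧ (parent u = v ∨ parent v = u)))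

theorem parentGraph_reachable_iterate (parent : V → V) (k : ℕ) (v : V) :
    (parentGraph parent).Reachable v (parent^[k] v) := by
  induction k generalizing v with
  | zero => rfl
  | succ k ih =>
    rw [Function.iterate_succ_apply]
    refine Reachable.trans ?_ (ih (parent v))
    by_cases hv : v = parent v
    · rw [← hv]
    · exact Adj.reachable ((fromRel_adj _ _ _).mpr ⟨hv, Or.inl rfl⟩)

theorem parentGraph_connected {parent : V → V} {root : V} {k : ℕ}
    (h : ∀ v, parent^[k] v = root) : (parentGraph parent).Connected :=
  (connected_iff_exists_forall_reachable _).mpr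
    ⟨root, fun v => h v ▸ (parentGraph_reachable_iterate parent k v).symm⟩

end ParentGraph

section DegreeSequence

variable {n : ℕ}

theorem realizes_iff_card_filter (G : SimpleGraph (Fin n)) [DecidableRel G.Adj] (d : Fin n → ℕ) :
    realizes G d ↔ ∀ v, #{u | G.Adj v u} = d v := by
  simp only [realizes, ← Set.ncard_coe_finset, coe_filter, mem_univ, true_and]

theorem isTree_of_connected_of_realizes {G : SimpleGraph (Fin n)} {d : Fin n → ℕ}
    (hG : G.Connected) (hr : realizes G d) (hsum : ∑ i, d i = 2 * n - 2) : G.IsTree := by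
  classical
  have hdeg (v : Fin n) : G.degree v = d v := by
    rw [← hr v, ← card_neighborSet_eq_degree, Set.ncard_eq_toFinset_card', Set.toFinset_card]
    rfl
  have hn : 0 < n := Fin.pos_iff_nonempty.mpr hG.nonempty
  have handshake := G.sum_degrees_eq_twice_card_edges
  simp only [hdeg, hsum] at handshake
  refine isTree_iff_connected_and_card.mpr ⟨hG, ?_⟩
  rw [Nat.card_eq_fintype_card, ← edgeFinset_card, Nat.card_eq_fintype_card, Fintype.card_fin]
  omega

theorem isCaterpillar.ncard_adj_le_ncard_adj_leaf_add_two {T : SimpleGraph (Fin n)}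
    (hT : isCaterpillar T) (v : Fin n) :
    {u | T.Adj v u}.ncard ≤ {u | T.Adj v u ∧ {w | T.Adj u w}.ncard ≤ 1}.ncard + 2 := by
  obtain ⟨hTree, p, hnd, hch, hspine⟩ := hT
  by_cases hv : v ∈ p
  · have hcover : {u | T.Adj v u} ⊆
        {u | T.Adj v u ∧ {w | T.Adj u w}.ncard ≤ 1} ∪ {u | T.Adj v u ∧ u ∈ p} := by
      intro u hu
      by_cases hleaf : {w | T.Adj u w}.ncard ≤ 1
      · exact Or.inl ⟨hu, hleaf⟩
      · exact Or.inr ⟨hu, (hspine u).mp (not_le.mp hleaf)⟩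
    calc {u | T.Adj v u}.ncard
        ≤ ({u | T.Adj v u ∧ {w | T.Adj u w}.ncard ≤ 1} ∪ {u | T.Adj v u ∧ u ∈ p}).ncard :=
          Set.ncard_le_ncard hcover
      _ ≤ _ := (Set.ncard_union_le _ _).trans
          (by grw [hTree.isAcyclic.ncard_adj_mem_le_two hnd hch hv])
  · have := mt (hspine v).mp hv
    omega

theorem two_mul_le_ncard_leaves_add_four {d : Fin n → ℕ} {T₁ T₂ : SimpleGraph (Fin n)}
    (h₁ : isCaterpillar T₁) (h₂ : isCaterpillar T₂) (hr₁ : realizes T₁ d) (hr₂ : realizes T₂ d)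
    (hdisj : Disjoint T₁.edgeSet T₂.edgeSet) (v : Fin n) :
    2 * d v ≤ {u | d u ≤ 1}.ncard + 4 := by
  have hleaves (T : SimpleGraph (Fin n)) (hT : isCaterpillar T) (hr : realizes T d) :
      d v ≤ {u | T.Adj v u ∧ d u ≤ 1}.ncard + 2 := by
    simpa only [show ∀ u, {w | T.Adj u w}.ncard = d u from hr] using
      hT.ncard_adj_le_ncard_adj_leaf_add_two v
  have hdisj' : Disjoint {u | T₁.Adj v u ∧ d u ≤ 1} {u | T₂.Adj v u ∧ d u ≤ 1} :=
    Set.disjoint_left.mpr fun u hu₁ hu₂ =>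
      SimpleGraph.disjoint_left.mp (disjoint_edgeSet.mp hdisj) v u hu₁.1 hu₂.1
  have hsub : {u | T₁.Adj v u ∧ d u ≤ 1} ∪ {u | T₂.Adj v u ∧ d u ≤ 1} ⊆ {u | d u ≤ 1} :=
    Set.union_subset (fun u hu => hu.2) (fun u hu => hu.2)
  have := Set.ncard_union_eq hdisj' ▸ Set.ncard_le_ncard hsub
  have := hleaves T₁ h₁ hr₁
  have := hleaves T₂ h₂ hr₂
  omega

end DegreeSequence

abbrev tree₁ : SimpleGraph (Fin 11) := parentGraph ![0, 0, 0, 1, 3, 4, 0, 0, 0, 5, 2]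

abbrev tree₂ : SimpleGraph (Fin 11) := parentGraph ![0, 4, 3, 0, 0, 0, 2, 1, 5, 0, 0]

theorem tree₁_realizes : realizes tree₁ ![5, 2, 2, 2, 2, 2, 1, 1, 1, 1, 1] :=
  (realizes_iff_card_filter _ _).mpr (by decide)

theorem tree₂_realizes : realizes tree₂ ![5, 2, 2, 2, 2, 2, 1, 1, 1, 1, 1] :=
  (realizes_iff_card_filter _ _).mpr (by decide)

theorem tree₁_isTree : tree₁.IsTree :=
  isTree_of_connected_of_realizes (parentGraph_connected (k := 5) (root := 0) (by decide))
    tree₁_realizes (by decide)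

theorem tree₂_isTree : tree₂.IsTree :=
  isTree_of_connected_of_realizes (parentGraph_connected (k := 3) (root := 0) (by decide))
    tree₂_realizes (by decide)

theorem disjoint_tree₁_tree₂ : Disjoint tree₁.edgeSet tree₂.edgeSet :=
  disjoint_edgeSet.mpr (SimpleGraph.disjoint_left.mpr (by decide))

theorem trees_but_no_caterpillars :
    (∃ T₁ T₂ : SimpleGraph (Fin 11),
        T₁.IsTree ∧ T₂.IsTree ∧
        realizes T₁ ![5,2,2,2,2,2,1,1,1,1,1] ∧ realizes T₂ ![5,2,2,2,2,2,1,1,1,1,1] ∧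
        Disjoint T₁.edgeSet T₂.edgeSet) ∧
    ¬ (∃ T₁ T₂ : SimpleGraph (Fin 11),
        isCaterpillar T₁ ∧ isCaterpillar T₂ ∧
        realizes T₁ ![5,2,2,2,2,2,1,1,1,1,1] ∧ realizes T₂ ![5,2,2,2,2,2,1,1,1,1,1] ∧
        Disjoint T₁.edgeSet T₂.edgeSet) := by
  refine ⟨⟨tree₁, tree₂, tree₁_isTree, tree₂_isTree, tree₁_realizes, tree₂_realizes,
    disjoint_tree₁_tree₂⟩, ?_⟩
  rintro ⟨T₁, T₂, h₁, h₂, hr₁, hr₂, hdisj⟩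
  have hcount := two_mul_le_ncard_leaves_add_four h₁ h₂ hr₁ hr₂ hdisj 0
  have hleaves : {u : Fin 11 | ![5,2,2,2,2,2,1,1,1,1,1] u ≤ 1}.ncard = 5 := by
    rw [Set.ncard_eq_toFinset_card']
    decide
  rw [hleaves] at hcount
  exact absurd hcount (by decide)
end

section
/- The number of labeled trees on vertices v_1,...,v_n (n ≥ 2) in which vertex v_i has degree d_i for all i, where each d_i ≥ 1 and Σ d_i = 2n − 2, equals (n−2)! / ∏_{k=1}^n (d_k − 1)!. -/
/-!
Induction on the number of vertices. Positive degrees summing to `2n - 2` include a `1`, say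
`d v = 1`. Deleting the leaf `v` is a bijection from the trees realizing `d` onto the pairs
`(u, S)` where `u ≠ v` and `S` is a tree on the other vertices realizing `d` with `d u` lowered
by one. By induction the pairs with a given `u` contribute `(d u - 1) (n - 3)! / ∏ (d k - 1)!`
(nothing when `d u = 1`, since a tree on at least two vertices has no isolated vertex), and
`∑_{u ≠ v} (d u - 1) = n - 2`.
-/

open Finset Function Nat

section Arithmetic

variable {ι : Type*} [Fintype ι]

lemma exists_eq_one_of_sum_lt {f : ι → ℕ} (hf : ∀ i, 1 ≤ f i)
    (h : ∑ i, f i < 2 * Fintype.card ι) : ∃ i, f i = 1 := by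
  by_contra! hne
  have : ∑ _i : ι, 2 ≤ ∑ i, f i :=
    sum_le_sum fun i _ => by have := hf i; have := hne i; omega
  rw [sum_const, Finset.card_univ, smul_eq_mul] at this
  omega

lemma sum_sub_one_add_card {f : ι → ℕ} (hf : ∀ i, 1 ≤ f i) :
    ∑ i, (f i - 1) + Fintype.card ι = ∑ i, f i := by
  rw [Fintype.card_eq_sum_ones, ← sum_add_distrib]
  exact sum_congr rfl fun i _ => Nat.sub_add_cancel (hf i)

variable [DecidableEq ι]

lemma sum_update_sub_one_add_one (f : ι → ℕ) {i : ι} (hi : 1 ≤ f i) :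
    ∑ j, update f i (f i - 1) j + 1 = ∑ j, f j := by
  rw [sum_update_of_mem (mem_univ i), sum_eq_add_sum_sdiff_singleton_of_mem (mem_univ i)]
  omega

lemma mul_prod_factorial_update_sub_one (f : ι → ℕ) {i : ι} (hi : 2 ≤ f i) :
    (f i - 1) * ∏ j, (update f i (f i - 1) j - 1)! = ∏ j, (f j - 1)! := by
  rw [Fintype.prod_eq_mul_prod_compl i, Fintype.prod_eq_mul_prod_compl i, update_self,
    prod_congr rfl fun j hj => by rw [update_of_ne (by simpa using hj)], ← mul_assoc,
    Nat.mul_factorial_pred (by omega)]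

end Arithmetic

namespace SimpleGraph

variable {V : Type*} {G : SimpleGraph V}

section Induce

lemma connected_of_connected_induce {s : Set V} (h : (G.induce s).Connected)
    (hs : ∀ x ∉ s, ∃ y ∈ s, G.Adj x y) : G.Connected := by
  obtain ⟨⟨r, hr⟩⟩ := h.nonempty
  have hreach : ∀ x ∈ s, G.Reachable r x := fun x hx =>
    (h.preconnected ⟨r, hr⟩ ⟨x, hx⟩).map (Embedding.induce s).toHom
  refine G.connected_iff_exists_forall_reachable.2 ⟨r, fun x => ?_⟩
  by_cases hx : x ∈ s
  · exact hreach x hx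
  · obtain ⟨y, hy, hxy⟩ := hs x hx
    exact (hreach y hy).trans hxy.symm.reachable

lemma isAcyclic_of_isAcyclic_induce {s : Set V} (h : (G.induce s).IsAcyclic)
    (hs : ∀ x ∉ s, (G.neighborSet x).Subsingleton) : G.IsAcyclic := by
  intro w c hc
  by_cases hsupp : ∀ x ∈ c.support, x ∈ s
  · have hinj : Injective (Embedding.induce s : G.induce s ↪g G).toHom :=
      (Embedding.induce (G := G) s).injective
    exact h _ <| (Walk.isCycle_map_iff_of_injective hinj).1 (by rwa [Walk.map_induce c hsupp])
  -- Otherwise some `x ∉ s` on the cycle has two distinct neighbours on it.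
  · classical
    push Not at hsupp
    obtain ⟨x, hx, hxs⟩ := hsupp
    have hc' := hc.rotate hx
    exact hc'.snd_ne_penultimate <| hs x hxs (Walk.adj_snd hc'.not_nil)
      (Walk.adj_penultimate hc'.not_nil).symm

lemma isTree_iff_isTree_induce_compl_singleton {v u : V} (hv : G.neighborSet v = {u}) :
    G.IsTree ↔ (G.induce {v}ᶜ).IsTree := by
  have hvu : G.Adj v u := by rw [← mem_neighborSet, hv]; rfl
  have hleaf : ∀ x ∉ ({v}ᶜ : Set V), (G.neighborSet x).Subsingleton := by
    intro x hx
    rw [Set.notMem_compl_iff, Set.mem_singleton_iff] at hx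
    rw [hx, hv]
    exact Set.subsingleton_singleton
  have : Nonempty ({v}ᶜ : Set V) := ⟨⟨u, hvu.ne'⟩⟩
  constructor
  · rintro ⟨hconn, hacyc⟩
    exact ⟨⟨hconn.preconnected.induce_of_degree_eq_one hleaf⟩, hacyc.induce _⟩
  · rintro ⟨hconn, hacyc⟩
    refine ⟨connected_of_connected_induce hconn fun x hx => ⟨u, hvu.ne', ?_⟩,
      isAcyclic_of_isAcyclic_induce hacyc hleaf⟩
    rw [Set.notMem_compl_iff, Set.mem_singleton_iff] at hx
    exact hx ▸ hvu

lemma ncard_neighborSet_induce (s : Set V) (w : s) :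
    ((G.induce s).neighborSet w).ncard = (G.neighborSet w ∩ s).ncard := by
  rw [← Set.ncard_image_of_injective _ Subtype.val_injective]
  exact congrArg Set.ncard
    (Set.image_preimage_eq_inter_range.trans (by rw [Subtype.range_coe]; rfl))

end Induce

section Leaf

variable {v : V}

def attachLeaf (v : V) (S : SimpleGraph ({v}ᶜ : Set V)) (u : ({v}ᶜ : Set V)) :
    SimpleGraph V :=
  S.map Subtype.val ⊔ edge v u

lemma neighborSet_attachLeaf (v : V) (S : SimpleGraph ({v}ᶜ : Set V)) (u : ({v}ᶜ : Set V)) :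
    (attachLeaf v S u).neighborSet v = {(u : V)} := by
  have hu : (u : V) ≠ v := u.2
  ext x
  simp only [mem_neighborSet, attachLeaf, sup_adj, map_adj', edge_adj, Set.mem_singleton_iff]
  constructor
  · rintro (⟨-, a, -, -, ha, -⟩ | ⟨⟨-, rfl⟩ | ⟨hvu, -⟩, -⟩)
    · exact absurd ha a.2
    · rfl
    · exact absurd hvu.symm hu
  · rintro rfl
    exact Or.inr ⟨Or.inl ⟨trivial, rfl⟩, hu.symm⟩

lemma induce_attachLeaf (v : V) (S : SimpleGraph ({v}ᶜ : Set V)) (u : ({v}ᶜ : Set V)) :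
    (attachLeaf v S u).induce {v}ᶜ = S := by
  ext ⟨a, ha⟩ ⟨b, hb⟩
  simp only [comap_adj, Function.Embedding.subtype_apply, attachLeaf, sup_adj, map_adj', edge_adj]
  constructor
  · rintro (⟨-, a', b', h, rfl, rfl⟩ | ⟨⟨rfl, -⟩ | ⟨-, rfl⟩, -⟩)
    · exact h
    · exact absurd rfl ha
    · exact absurd rfl hb
  · exact fun h => Or.inl ⟨fun hab => h.ne (Subtype.ext hab), _, _, h, rfl, rfl⟩

lemma attachLeaf_induce {u : ({v}ᶜ : Set V)} (hv : G.neighborSet v = {(u : V)}) :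
    attachLeaf v (G.induce {v}ᶜ) u = G := by
  have h : ∀ x, G.Adj v x ↔ x = u := fun x => by rw [← mem_neighborSet, hv]; rfl
  ext a b
  simp only [attachLeaf, sup_adj, map_adj', comap_adj, Function.Embedding.subtype_apply, edge_adj]
  constructor
  · rintro (⟨-, a', b', hab, rfl, rfl⟩ | ⟨⟨rfl, rfl⟩ | ⟨rfl, rfl⟩, -⟩)
    · exact hab
    · exact (h _).2 rfl
    · exact ((h _).2 rfl).symm
  · intro hab
    by_cases ha : a = v
    · subst ha
      exact Or.inr ⟨Or.inl ⟨rfl, (h b).1 hab⟩, hab.ne⟩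
    by_cases hb : b = v
    · subst hb
      exact Or.inr ⟨Or.inr ⟨(h a).1 hab.symm, rfl⟩, hab.ne⟩
    exact Or.inl ⟨hab.ne, ⟨a, ha⟩, ⟨b, hb⟩, hab, rfl, rfl⟩

lemma eq_and_eq_of_attachLeaf_eq {u u' : ({v}ᶜ : Set V)} {S S' : SimpleGraph ({v}ᶜ : Set V)}
    (h : attachLeaf v S u = attachLeaf v S' u') : u = u' ∧ S = S' := by
  have hu : ({(u : V)} : Set V) = {(u' : V)} := by
    rw [← neighborSet_attachLeaf v S u, ← neighborSet_attachLeaf v S' u', h]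
  refine ⟨Subtype.ext (Set.singleton_eq_singleton_iff.1 hu), ?_⟩
  rw [← induce_attachLeaf v S u, ← induce_attachLeaf v S' u', h]

end Leaf

section Degrees

def treesWithDegrees (d : V → ℕ) : Set (SimpleGraph V) :=
  {T | T.IsTree ∧ ∀ x, (T.neighborSet x).ncard = d x}

variable [DecidableEq V] {d : V → ℕ} {v : V}

def deleteLeafDegrees (d : V → ℕ) (v : V) (u : ({v}ᶜ : Set V)) : ({v}ᶜ : Set V) → ℕ :=
  update (fun w => d w) u (d u - 1)

lemma ncard_neighborSet_induce_compl_singleton_add [Finite V] {u : ({v}ᶜ : Set V)}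
    (hv : G.neighborSet v = {(u : V)}) (w : ({v}ᶜ : Set V)) :
    ((G.induce {v}ᶜ).neighborSet w).ncard + (if w = u then 1 else 0) =
      (G.neighborSet w).ncard := by
  have h : ∀ x, G.Adj v x ↔ x = u := fun x => by rw [← mem_neighborSet, hv]; rfl
  rw [ncard_neighborSet_induce, ← Set.sdiff_eq]
  split_ifs with hw
  · subst hw
    exact Set.ncard_sdiff_singleton_add_one ((h w).2 rfl).symm
  · rw [add_zero, Set.sdiff_singleton_eq_self]
    exact fun hwv => hw (Subtype.ext ((h w).1 (Adj.symm hwv)))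

lemma ncard_neighborSet_eq_iff_induce [Finite V] {u : ({v}ᶜ : Set V)}
    (hv : G.neighborSet v = {(u : V)}) (hdv : d v = 1) (hdu : 1 ≤ d u) :
    (∀ x, (G.neighborSet x).ncard = d x) ↔
      ∀ w, ((G.induce {v}ᶜ).neighborSet w).ncard = deleteLeafDegrees d v u w := by
  have key := ncard_neighborSet_induce_compl_singleton_add hv
  constructor
  · intro hd w
    have := key w
    rw [hd] at this
    by_cases hw : w = u
    · subst hw
      simp only [deleteLeafDegrees, if_true, update_self] at this ⊢
      omega
    · simp only [deleteLeafDegrees, hw, if_false, update_of_ne hw] at this ⊢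
      omega
  · intro hd x
    by_cases hx : x = v
    · rw [hx, hv, Set.ncard_singleton, hdv]
    · lift x to ({v}ᶜ : Set V) using hx
      have := key x
      rw [hd] at this
      by_cases hw : x = u
      · subst hw
        simp only [deleteLeafDegrees, if_true, update_self] at this
        omega
      · simpa only [deleteLeafDegrees, hw, if_false, update_of_ne hw, add_zero] using this.symm

lemma attachLeaf_mem_treesWithDegrees [Finite V] (hd : ∀ x, 1 ≤ d x) (hdv : d v = 1)
    {u : ({v}ᶜ : Set V)} {S : SimpleGraph ({v}ᶜ : Set V)}
    (hS : S ∈ treesWithDegrees (deleteLeafDegrees d v u)) :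
    attachLeaf v S u ∈ treesWithDegrees d := by
  have hv := neighborSet_attachLeaf v S u
  refine ⟨(isTree_iff_isTree_induce_compl_singleton hv).2 ?_,
    (ncard_neighborSet_eq_iff_induce hv hdv (hd u)).2 ?_⟩ <;> rw [induce_attachLeaf]
  exacts [hS.1, hS.2]

lemma exists_attachLeaf_eq [Finite V] (hd : ∀ x, 1 ≤ d x) (hdv : d v = 1)
    {T : SimpleGraph V} (hT : T ∈ treesWithDegrees d) :
    ∃ (u : ({v}ᶜ : Set V)) (S : SimpleGraph ({v}ᶜ : Set V)),
      S ∈ treesWithDegrees (deleteLeafDegrees d v u) ∧ attachLeaf v S u = T := by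
  obtain ⟨u, hu⟩ := Set.ncard_eq_one.1 ((hT.2 v).trans hdv)
  have huv : u ≠ v := (show T.Adj v u by rw [← mem_neighborSet, hu]; rfl).ne'
  lift u to ({v}ᶜ : Set V) using huv
  exact ⟨u, T.induce {v}ᶜ, ⟨(isTree_iff_isTree_induce_compl_singleton hu).1 hT.1,
    (ncard_neighborSet_eq_iff_induce hu hdv (hd u)).1 hT.2⟩, attachLeaf_induce hu⟩

theorem ncard_treesWithDegrees_eq_sum [Fintype V] (hd : ∀ x, 1 ≤ d x) (hdv : d v = 1) :
    (treesWithDegrees d).ncard =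
      ∑ u : ({v}ᶜ : Set V), (treesWithDegrees (deleteLeafDegrees d v u)).ncard := by
  let f : (Σ u : ({v}ᶜ : Set V), treesWithDegrees (deleteLeafDegrees d v u)) →
      treesWithDegrees d :=
    fun p => ⟨attachLeaf v p.2 p.1, attachLeaf_mem_treesWithDegrees hd hdv p.2.2⟩
  have hf : Bijective f := by
    refine ⟨?_, ?_⟩
    · rintro ⟨u, S, hS⟩ ⟨u', S', hS'⟩ h
      obtain ⟨rfl, rfl⟩ := eq_and_eq_of_attachLeaf_eq (congrArg Subtype.val h)
      rfl
    · rintro ⟨T, hT⟩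
      obtain ⟨u, S, hS, rfl⟩ := exists_attachLeaf_eq hd hdv hT
      exact ⟨⟨u, S, hS⟩, rfl⟩
  rw [← Nat.card_coe_set_eq, ← Nat.card_congr (Equiv.ofBijective f hf), Nat.card_sigma]
  rfl

end Degrees

lemma treesWithDegrees_eq_empty_of_eq_zero [Finite V] [Nontrivial V] {d : V → ℕ} {x : V}
    (hx : d x = 0) : treesWithDegrees d = ∅ := by
  refine Set.eq_empty_of_forall_notMem fun T hT => ?_
  obtain ⟨y, hy⟩ := exists_ne x
  have hpos := (Set.ncard_pos (Set.toFinite _)).2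
    ((hT.1.preconnected x y).nonempty_neighborSet_left hy.symm)
  rw [hT.2 x, hx] at hpos
  exact hpos.false

lemma treesWithDegrees_eq_singleton_bot [Nonempty V] [Subsingleton V] {d : V → ℕ}
    (hd : ∀ x, d x = 0) : treesWithDegrees d = {⊥} := by
  ext T
  have hT : T = ⊥ := by
    ext a b
    simp [Subsingleton.elim a b]
  simp only [treesWithDegrees, Set.mem_ofPred_eq, Set.mem_singleton_iff, hT, iff_true]
  exact ⟨.of_subsingleton, fun x => by simp [hd]⟩

section Count

variable [Fintype V] [DecidableEq V] {d : V → ℕ}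

lemma ncard_treesWithDegrees_mul_prod_eq_sum (hd : ∀ x, 1 ≤ d x) {v : V} (hdv : d v = 1) :
    (treesWithDegrees d).ncard * ∏ x, (d x - 1)! =
      ∑ u : ({v}ᶜ : Set V), (treesWithDegrees (deleteLeafDegrees d v u)).ncard *
        ∏ w : ({v}ᶜ : Set V), (d w - 1)! := by
  rw [ncard_treesWithDegrees_eq_sum hd hdv, sum_mul,
    Fintype.prod_eq_mul_prod_subtype_ne _ v, hdv, Nat.sub_self, factorial_zero, one_mul]
  -- `{x // x ≠ v}` and `↥({v}ᶜ : Set V)` are the same type up to unfolding.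
  rfl

lemma ncard_treesWithDegrees_mul_prod_of_card_eq_two (hV : Fintype.card V = 2)
    (hd : ∀ x, 1 ≤ d x) (hsum : ∑ x, d x = 2) :
    (treesWithDegrees d).ncard * ∏ x, (d x - 1)! = 1 := by
  obtain ⟨v, hv⟩ := exists_eq_one_of_sum_lt hd (by omega)
  have hW : Fintype.card ({v}ᶜ : Set V) = 1 := by
    rw [Fintype.card_compl_set, Set.card_singleton]; omega
  obtain ⟨_⟩ := Fintype.card_eq_one_iff_nonempty_unique.1 hW
  have hu : d (default : ({v}ᶜ : Set V)) = 1 := by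
    have : ∑ x, d x = d v + ∑ w : ({v}ᶜ : Set V), d w := Fintype.sum_eq_add_sum_subtype_ne d v
    rw [Fintype.sum_unique (fun w : ({v}ᶜ : Set V) => d w)] at this
    omega
  rw [ncard_treesWithDegrees_mul_prod_eq_sum hd hv, Fintype.sum_unique, Fintype.prod_unique,
    treesWithDegrees_eq_singleton_bot fun w => ?_, Set.ncard_singleton, hu]
  · rfl
  · rw [Unique.eq_default w, deleteLeafDegrees, update_self, hu]

lemma ncard_treesWithDegrees_deleteLeafDegrees_mul_prod {n : ℕ} (hd : ∀ x, 1 ≤ d x) {v : V}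
    [Nontrivial ({v}ᶜ : Set V)]
    (ih : ∀ d' : ({v}ᶜ : Set V) → ℕ, (∀ w, 1 ≤ d' w) → ∑ w, d' w = 2 * n + 2 →
      (treesWithDegrees d').ncard * ∏ w, (d' w - 1)! = n !)
    (hsum : ∑ w : ({v}ᶜ : Set V), d w = 2 * n + 3) (u : ({v}ᶜ : Set V)) :
    (treesWithDegrees (deleteLeafDegrees d v u)).ncard * ∏ w : ({v}ᶜ : Set V), (d w - 1)! =
      (d u - 1) * n ! := by
  rcases (hd u).eq_or_lt with hu | hu
  · rw [treesWithDegrees_eq_empty_of_eq_zero (x := u) (by simp [deleteLeafDegrees, ← hu]),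
      Set.ncard_empty, ← hu, zero_mul, Nat.sub_self, zero_mul]
  rw [← mul_prod_factorial_update_sub_one (fun w : ({v}ᶜ : Set V) => d w) hu, mul_left_comm]
  congr 1
  refine ih (deleteLeafDegrees d v u) (fun w => ?_) ?_ <;> unfold deleteLeafDegrees
  · by_cases hw : w = u
    · subst hw
      rw [update_self]
      omega
    · simp [hw, hd w]
  · have := sum_update_sub_one_add_one (fun w : ({v}ᶜ : Set V) => d w) hu.le
    omega

lemma ncard_treesWithDegrees_mul_prod_of_leaf {n : ℕ} (hV : Fintype.card V = n + 3)
    (hd : ∀ x, 1 ≤ d x) (hsum : ∑ x, d x = 2 * n + 4) {v : V} (hv : d v = 1)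
    (ih : ∀ d' : ({v}ᶜ : Set V) → ℕ, (∀ w, 1 ≤ d' w) → ∑ w, d' w = 2 * n + 2 →
      (treesWithDegrees d').ncard * ∏ w, (d' w - 1)! = n !) :
    (treesWithDegrees d).ncard * ∏ x, (d x - 1)! = (n + 1)! := by
  have hW : Fintype.card ({v}ᶜ : Set V) = n + 2 := by
    rw [Fintype.card_compl_set, Set.card_singleton]; omega
  have : Nontrivial ({v}ᶜ : Set V) := Fintype.one_lt_card_iff_nontrivial.1 (by omega)
  have hsumW : ∑ w : ({v}ᶜ : Set V), d w = 2 * n + 3 := by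
    have : ∑ x, d x = d v + ∑ w : ({v}ᶜ : Set V), d w := Fintype.sum_eq_add_sum_subtype_ne d v
    omega
  have hsumW' : ∑ u : ({v}ᶜ : Set V), (d u - 1) = n + 1 := by
    have := sum_sub_one_add_card fun w : ({v}ᶜ : Set V) => hd w
    omega
  rw [ncard_treesWithDegrees_mul_prod_eq_sum hd hv,
    sum_congr rfl fun u _ => ncard_treesWithDegrees_deleteLeafDegrees_mul_prod hd ih hsumW u,
    ← sum_mul, hsumW', factorial_succ]

theorem ncard_treesWithDegrees_mul_prod_factorial (hV : 2 ≤ Fintype.card V)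
    (hd : ∀ x, 1 ≤ d x) (hsum : ∑ x, d x = 2 * Fintype.card V - 2) :
    (treesWithDegrees d).ncard * ∏ x, (d x - 1)! = (Fintype.card V - 2)! := by
  obtain ⟨n, hn⟩ := Nat.exists_eq_add_of_le' hV
  rw [hn] at hsum ⊢
  clear hV
  induction n generalizing V with
  | zero => exact ncard_treesWithDegrees_mul_prod_of_card_eq_two hn hd hsum
  | succ n ih =>
    obtain ⟨v, hv⟩ := exists_eq_one_of_sum_lt hd (by omega)
    refine ncard_treesWithDegrees_mul_prod_of_leaf hn hd (by omega) hv fun d' hd' hsum' => ?_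
    exact ih hd' (by omega) (by rw [Fintype.card_compl_set, Set.card_singleton]; omega)

end Count

end SimpleGraph

theorem tree_count_with_degree_sequence (n : ℕ) (hn : 2 ≤ n) (d : Fin n → ℕ)
    (hd : isTreeSeq d) :
    {T : SimpleGraph (Fin n) | T.IsTree ∧ realizes T d}.ncard *
        ∏ k, Nat.factorial (d k - 1) = Nat.factorial (n - 2) := by
  have h := SimpleGraph.ncard_treesWithDegrees_mul_prod_factorial (d := d)
    (by rwa [Fintype.card_fin]) hd.1 (by rw [Fintype.card_fin]; exact hd.2)
  rwa [Fintype.card_fin] at h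
end

section
/- Let (d_1,...,d_n) be a tree degree sequence with n ≥ 3 and let i ≠ j. The number of labeled trees on {v_1,...,v_n} with degree sequence (d_1,...,d_n) in which v_i and v_j are adjacent equals (d_i + d_j − 2)·(n−3)! / ∏_{k=1}^n (d_k − 1)!. -/
/-!
Induct on `n` by deleting a leaf `ℓ ∉ {i, j}`. If `ℓ` hangs at `m`, deleting it is a bijection
between the counted trees in which `ℓ ~ m` and the trees on the other `n - 1` vertices that
contain the edge `ij` and have degree sequence `d'`, which is `d` with `d m` lowered by one.
Since `(d m - 1)! = (d m - 1) (d m - 2)!`, the weighted count `N(d) = #trees · ∏ (d k - 1)!`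
satisfies `N(d) = ∑ m, (d m - 1) N(d')`, and the formula follows from
`∑ m, (d m - 1) (d i + d j - 2 - [m = i] - [m = j]) = (d i + d j - 2) (n - 3)`.
A leaf outside `{i, j}` exists unless `d i = d j = 1`, and then the edge `ij` would be a whole
component; for `n = 3` the recursion ends at the single edge on two vertices.
-/

open scoped Nat

section Arithmetic

variable {W : Type*} [Fintype W] {e : W → ℕ}

@[to_additive]
lemma Fintype.prod_eq_mul_prod_compl_singleton {M : Type*} [DecidableEq W] [CommMonoid M]
    (f : W → M) (a : W) : ∏ x, f x = f a * ∏ x : ({a}ᶜ : Set W), f x :=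
  Fintype.prod_eq_mul_prod_subtype_ne f a

lemma Fintype.card_compl_singleton [DecidableEq W] (a : W) :
    Fintype.card ({a}ᶜ : Set W) = Fintype.card W - 1 :=
  Fintype.card_subtype_compl _ |>.trans (by simp)

lemma sum_tsub_one_add_card (he : ∀ x, 1 ≤ e x) :
    ∑ x, (e x - 1) + Fintype.card W = ∑ x, e x := by
  rw [← Finset.card_univ, Finset.card_eq_sum_ones, ← Finset.sum_add_distrib]
  exact Finset.sum_congr rfl fun x _ => Nat.sub_add_cancel (he x)

variable [DecidableEq W]

lemma sum_update_pred_add_one {m : W} (h : 1 ≤ e m) :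
    ∑ x, Function.update e m (e m - 1) x + 1 = ∑ x, e x := by
  rw [Finset.sum_update_of_mem (Finset.mem_univ m), Finset.sdiff_singleton_eq_erase,
    ← Finset.add_sum_erase _ _ (Finset.mem_univ m)]
  omega

lemma prod_factorial_pred_update {m : W} (h : 2 ≤ e m) :
    ∏ x, (e x - 1)! = (e m - 1) * ∏ x, (Function.update e m (e m - 1) x - 1)! := by
  rw [← Finset.mul_prod_erase _ _ (Finset.mem_univ m),
    ← Finset.mul_prod_erase _ _ (Finset.mem_univ m), Function.update_self, ← mul_assoc,
    Nat.mul_factorial_pred (by omega)]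
  congr 1
  exact Finset.prod_congr rfl fun x hx => by
    rw [Function.update_of_ne (Finset.ne_of_mem_erase hx)]

lemma sum_mul_update_add {i j : W} (he : ∀ x, 1 ≤ e x) (hij : i ≠ j) :
    ∑ m, (e m - 1) * (Function.update e m (e m - 1) i + Function.update e m (e m - 1) j - 2) +
      (e i + e j - 2) = (e i + e j - 2) * ∑ m, (e m - 1) := by
  have hdiag (x y : ℕ) (hx : 1 ≤ x) (hy : 1 ≤ y) :
      (x - 1) * (x - 1 + y - 2) + (x - 1) = (x + y - 2) * (x - 1) := by
    obtain ⟨a, rfl⟩ := Nat.exists_eq_add_of_le' hx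
    obtain ⟨b, rfl⟩ := Nat.exists_eq_add_of_le' hy
    rcases a with _ | a
    · simp
    · rw [show a + 1 + 1 - 1 + (b + 1) - 2 = a + b by omega,
        show a + 1 + 1 + (b + 1) - 2 = a + 1 + b by omega, add_tsub_cancel_right]
      ring
  have hterm (m : W) :
      (e m - 1) * (Function.update e m (e m - 1) i + Function.update e m (e m - 1) j - 2) +
        ((if m = i then e i - 1 else 0) + (if m = j then e j - 1 else 0)) =
      (e i + e j - 2) * (e m - 1) := by
    by_cases hi : m = i
    · subst hi
      simpa [hij, Function.update_of_ne hij.symm] using hdiag _ _ (he m) (he j)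
    by_cases hj : m = j
    · subst hj
      simpa [hi, Function.update_of_ne (Ne.symm hi), add_comm] using hdiag _ _ (he m) (he i)
    simp [hi, hj, Function.update_of_ne, Ne.symm hi, Ne.symm hj, mul_comm]
  rw [Finset.mul_sum, ← Finset.sum_congr rfl fun m _ => hterm m, Finset.sum_add_distrib,
    Finset.sum_add_distrib, Finset.sum_ite_eq', Finset.sum_ite_eq']
  simp only [Finset.mem_univ, if_true]
  have := he i
  have := he j
  omega

end Arithmetic

namespace SimpleGraph

variable {V : Type*} {T : SimpleGraph V} {ℓ m : V}

def addLeaf (T' : SimpleGraph ({ℓ}ᶜ : Set V)) (m : V) : SimpleGraph V :=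
  T'.map Subtype.val ⊔ edge ℓ m

lemma addLeaf_adj {T' : SimpleGraph ({ℓ}ᶜ : Set V)} {u v : V} :
    (addLeaf T' m).Adj u v ↔
      (∃ (hu : u ≠ ℓ) (hv : v ≠ ℓ), T'.Adj ⟨u, hu⟩ ⟨v, hv⟩) ∨ (edge ℓ m).Adj u v := by
  rw [addLeaf, sup_adj, map_adj' Subtype.val]
  constructor
  · rintro (⟨-, ⟨u, hu⟩, ⟨v, hv⟩, h, rfl, rfl⟩ | h)
    · exact .inl ⟨hu, hv, h⟩
    · exact .inr h
  · rintro (⟨hu, hv, h⟩ | h)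
    · exact .inl ⟨fun huv => h.ne (Subtype.ext huv), _, _, h, rfl, rfl⟩
    · exact .inr h

lemma induce_addLeaf (T' : SimpleGraph ({ℓ}ᶜ : Set V)) (m : V) :
    (addLeaf T' m).induce {ℓ}ᶜ = T' := by
  ext ⟨u, hu : u ≠ ℓ⟩ ⟨v, hv : v ≠ ℓ⟩
  simp [addLeaf_adj, edge_adj, hu, hv]

lemma neighborSet_addLeaf (T' : SimpleGraph ({ℓ}ᶜ : Set V)) (hm : m ≠ ℓ) :
    (addLeaf T' m).neighborSet ℓ = {m} := by
  ext v
  simp only [mem_neighborSet, addLeaf_adj, edge_adj]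
  grind

lemma addLeaf_induce (hℓ : T.neighborSet ℓ = {m}) : addLeaf (T.induce {ℓ}ᶜ) m = T := by
  have hadj (v : V) : T.Adj ℓ v ↔ v = m := Set.ext_iff.1 hℓ v
  have hm : m ≠ ℓ := fun h => T.loopless.irrefl ℓ ((hadj ℓ).2 h.symm)
  ext u v
  by_cases hu : u = ℓ
  · subst hu
    simp only [addLeaf_adj, edge_adj, hadj]
    grind
  by_cases hv : v = ℓ
  · subst hv
    simp only [addLeaf_adj, edge_adj, T.adj_comm u, hadj]
    grind
  simp [addLeaf_adj, edge_adj, hu, hv]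

lemma Walk.IsCycle.notMem_support_of_subsingleton_neighborSet {u : V} {c : T.Walk u u}
    (hc : c.IsCycle) (hℓ : (T.neighborSet ℓ).Subsingleton) : ℓ ∉ c.support := fun h => by
  have h2 := hc.ncard_neighborSet_toSubgraph_eq_two h
  rcases (hℓ.anti (c.toSubgraph.neighborSet_subset ℓ)).eq_empty_or_singleton with h0 | ⟨x, hx⟩
    <;> simp_all

lemma isTree_iff_isTree_induce (hℓ : T.neighborSet ℓ = {m}) :
    T.IsTree ↔ (T.induce {ℓ}ᶜ).IsTree := by
  have hℓm : T.Adj ℓ m := hℓ.symm.subset rfl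
  have hsub : (T.neighborSet ℓ).Subsingleton := hℓ ▸ Set.subsingleton_singleton
  constructor
  · intro hT
    have : Nonempty ({ℓ}ᶜ : Set V) := ⟨⟨m, hℓm.ne.symm⟩⟩
    refine ⟨⟨hT.connected.preconnected.induce_of_degree_eq_one fun v hv => ?_⟩,
      hT.isAcyclic.induce _⟩
    rwa [Set.notMem_compl_iff.1 hv]
  · intro hT'
    refine ⟨(connected_iff_exists_forall_reachable _).2 ⟨m, fun v => ?_⟩, fun u c hc => ?_⟩
    · by_cases hv : v = ℓ
      · exact hv ▸ hℓm.symm.reachable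
      · exact (hT'.connected ⟨m, hℓm.ne.symm⟩ ⟨v, hv⟩).map (Embedding.induce _).toHom
    · have hc' := hc.notMem_support_of_subsingleton_neighborSet hsub
      have hw : ∀ x ∈ c.support, x ∈ ({ℓ}ᶜ : Set V) := fun x hx h => hc' (h ▸ hx)
      refine hT'.isAcyclic (c.induce _ hw) ?_
      rwa [← Walk.isCycle_map_iff_of_injective (f := (Embedding.induce _).toHom)
        Subtype.val_injective, Walk.map_induce]

lemma ncard_neighborSet_induce_add [Finite V] [DecidableEq V] {m : ({ℓ}ᶜ : Set V)}
    (hℓ : T.neighborSet ℓ = {↑m}) (x : ({ℓ}ᶜ : Set V)) :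
    ((T.induce {ℓ}ᶜ).neighborSet x).ncard + (if x = m then 1 else 0) =
      (T.neighborSet x).ncard := by
  have hval : ((T.induce {ℓ}ᶜ).neighborSet x).ncard = (T.neighborSet x \ {ℓ}).ncard := by
    rw [← Set.ncard_image_of_injective _ Subtype.val_injective, Set.sdiff_eq_compl_inter]
    exact congrArg Set.ncard (Subtype.image_preimage_coe _ _)
  rw [hval]
  split_ifs with hxm
  · refine Set.ncard_sdiff_singleton_add_one ?_ (Set.toFinite _)
    rw [mem_neighborSet, hxm, adj_comm]
    exact hℓ.symm.subset rfl
  · rw [add_zero, Set.sdiff_singleton_eq_self]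
    exact fun h => hxm (Subtype.ext (hℓ.subset (T.adj_symm h)))

lemma neighborSet_eq_singleton_of_ncard_eq_one (h : (T.neighborSet ℓ).ncard = 1)
    (hadj : T.Adj ℓ m) : T.neighborSet ℓ = {m} := by
  obtain ⟨a, ha⟩ := Set.ncard_eq_one.1 h
  rwa [Set.eq_singleton_iff_unique_mem.1 ha |>.2 m hadj]

def HasDegrees (T : SimpleGraph V) (d : V → ℕ) : Prop :=
  ∀ v, (T.neighborSet v).ncard = d v

def treesWithEdge (d : V → ℕ) (i j : V) : Set (SimpleGraph V) :=
  {T | T.IsTree ∧ T.HasDegrees d ∧ T.Adj i j}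

def leafRemovedDegrees [DecidableEq V] (d : V → ℕ) (m : ({ℓ}ᶜ : Set V)) :
    ({ℓ}ᶜ : Set V) → ℕ :=
  Function.update (fun x => d x) m (d m - 1)

@[simp]
lemma leafRemovedDegrees_self [DecidableEq V] (d : V → ℕ) (m : ({ℓ}ᶜ : Set V)) :
    leafRemovedDegrees d m m = d m - 1 :=
  Function.update_self ..

@[simp]
lemma leafRemovedDegrees_of_ne [DecidableEq V] (d : V → ℕ) {m x : ({ℓ}ᶜ : Set V)}
    (h : x ≠ m) : leafRemovedDegrees d m x = d x :=
  Function.update_of_ne h ..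

lemma leafRemovedDegrees_add_ite [DecidableEq V] {d : V → ℕ} {m : ({ℓ}ᶜ : Set V)} (hdm : 1 ≤ d m)
    (x : ({ℓ}ᶜ : Set V)) : leafRemovedDegrees d m x + (if x = m then 1 else 0) = d x := by
  rcases eq_or_ne x m with rfl | hx
  · rw [leafRemovedDegrees_self, if_pos rfl]
    omega
  · rw [leafRemovedDegrees_of_ne d hx, if_neg hx, add_zero]

section Fintype

variable [Fintype V]

def IsTreeDegreeSeq (d : V → ℕ) : Prop :=
  (∀ v, 1 ≤ d v) ∧ ∑ v, d v = 2 * Fintype.card V - 2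

lemma ncard_treesWithEdge_mul_prod_of_card_eq_two (hV : Fintype.card V = 2) {d : V → ℕ}
    (hd : IsTreeDegreeSeq d) {i j : V} (hij : i ≠ j) :
    (treesWithEdge d i j).ncard * ∏ k, (d k - 1)! = 1 := by
  have hd1 (v : V) : d v = 1 := by
    have h := sum_tsub_one_add_card hd.1
    rw [hV, hd.2, hV, add_eq_right, Finset.sum_eq_zero_iff] at h
    exact le_antisymm (Nat.sub_eq_zero_iff_le.1 (h v (Finset.mem_univ v))) (hd.1 v)
  have hcompl (v : V) : ({v}ᶜ : Set V).ncard = 1 := by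
    rw [Set.ncard_compl, Nat.card_eq_fintype_card, hV, Set.ncard_singleton]
  have : Nonempty V := ⟨i⟩
  have htop : treesWithEdge d i j = {⊤} := by
    refine Set.eq_singleton_iff_unique_mem.2 ⟨⟨⟨connected_top, IsAcyclic.of_card_le_two ?_⟩,
      fun v => by rw [neighborSet_top, hcompl, hd1], hij⟩, fun T ⟨_, hdeg, _⟩ => ?_⟩
    · simp [ENat.card_eq_coe_fintype_card, hV]
    · have hnbr (v : V) : T.neighborSet v = {v}ᶜ :=
        Set.eq_of_subset_of_ncard_le (fun w hw => (T.ne_of_adj hw).symm)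
          (by rw [hcompl, hdeg, hd1]) (Set.toFinite _)
      ext u v
      simpa [eq_comm] using Set.ext_iff.1 (hnbr u) v
  simp [htop, hd1]

variable [DecidableEq V]

lemma IsTreeDegreeSeq.exists_ne_ne_eq_one {d : V → ℕ} (hd : IsTreeDegreeSeq d) {i j : V}
    (hij : i ≠ j) (h : 2 < d i + d j) : ∃ ℓ, ℓ ≠ i ∧ ℓ ≠ j ∧ d ℓ = 1 := by
  by_contra! hrest
  have hj : j ∈ Finset.univ.erase i := Finset.mem_erase.2 ⟨hij.symm, Finset.mem_univ j⟩
  have hsplit := Finset.add_sum_erase _ d hj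
  have hsplit' := Finset.add_sum_erase _ d (Finset.mem_univ i)
  have hcard : ((Finset.univ.erase i).erase j).card = Fintype.card V - 2 := by
    rw [Finset.card_erase_of_mem hj, Finset.card_erase_of_mem (Finset.mem_univ i),
      Finset.card_univ]
    rfl
  have hle := Finset.card_nsmul_le_sum ((Finset.univ.erase i).erase j) (fun v => d v) 2
    fun v hv => by
      obtain ⟨hvj, hv⟩ := Finset.mem_erase.1 hv
      have := hrest v (Finset.ne_of_mem_erase hv) hvj
      have := hd.1 v
      omega
  rw [hcard, smul_eq_mul] at hle
  have := hd.2
  omega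

lemma IsTreeDegreeSeq.sum_compl_singleton {d : V → ℕ} (hd : IsTreeDegreeSeq d)
    (hdℓ : d ℓ = 1) : ∑ x : ({ℓ}ᶜ : Set V), d x = 2 * Fintype.card V - 3 := by
  have := Fintype.sum_eq_add_sum_compl_singleton d ℓ
  have := hd.2
  omega

lemma IsTreeDegreeSeq.sum_tsub_one_compl_singleton {d : V → ℕ} (hd : IsTreeDegreeSeq d)
    (hdℓ : d ℓ = 1) : ∑ x : ({ℓ}ᶜ : Set V), (d x - 1) = Fintype.card V - 2 := by
  have : ∑ x : ({ℓ}ᶜ : Set V), (d x - 1) + _ = _ := sum_tsub_one_add_card fun x => hd.1 x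
  have := hd.sum_compl_singleton hdℓ
  have := Fintype.card_compl_singleton ℓ
  omega

lemma isTreeDegreeSeq_leafRemovedDegrees {d : V → ℕ} (hd : IsTreeDegreeSeq d)
    (hdℓ : d ℓ = 1) {m : ({ℓ}ᶜ : Set V)} (hm : 2 ≤ d m) :
    IsTreeDegreeSeq (leafRemovedDegrees d m) := by
  refine ⟨fun x => ?_, ?_⟩
  · rcases eq_or_ne x m with rfl | hx
    · rw [leafRemovedDegrees_self]
      omega
    · rw [leafRemovedDegrees_of_ne d hx]
      exact hd.1 x
  · have : ∑ x, leafRemovedDegrees d m x + 1 = ∑ x : ({ℓ}ᶜ : Set V), d x :=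
      sum_update_pred_add_one (e := fun x : ({ℓ}ᶜ : Set V) => d x) (by omega)
    have := hd.sum_compl_singleton hdℓ
    have := Fintype.card_compl_singleton ℓ
    omega

lemma hasDegrees_iff_induce {d : V → ℕ} {m : ({ℓ}ᶜ : Set V)} (hℓ : T.neighborSet ℓ = {↑m})
    (hdℓ : d ℓ = 1) (hdm : 1 ≤ d m) :
    T.HasDegrees d ↔ (T.induce {ℓ}ᶜ).HasDegrees (leafRemovedDegrees d m) := by
  have hdeg := ncard_neighborSet_induce_add hℓ
  have hd' := leafRemovedDegrees_add_ite (d := d) hdm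
  constructor
  · intro h x
    have := hdeg x
    have := hd' x
    have := h x
    omega
  · intro h v
    by_cases hv : v = ℓ
    · rw [hv, hℓ, Set.ncard_singleton, hdℓ]
    · lift v to ({ℓ}ᶜ : Set V) using hv
      have := hdeg v
      have := hd' v
      have := h v
      omega

lemma IsTree.not_adj_of_ncard_neighborSet_eq_one (hT : T.IsTree) (hV : 3 ≤ Fintype.card V)
    {u v : V} (hu : (T.neighborSet u).ncard = 1) (hv : (T.neighborSet v).ncard = 1) :
    ¬ T.Adj u v := by
  intro huv
  have hℓ := neighborSet_eq_singleton_of_ncard_eq_one hu huv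
  have hT' := (isTree_iff_isTree_induce hℓ).1 hT
  have : Nontrivial ({u}ᶜ : Set V) := by
    rw [← Fintype.one_lt_card_iff_nontrivial, Fintype.card_compl_singleton]; omega
  obtain ⟨w, hw⟩ := hT'.connected.preconnected.exists_adj_of_nontrivial ⟨v, huv.ne.symm⟩
  have h0 := ncard_neighborSet_induce_add (m := ⟨v, huv.ne.symm⟩) hℓ ⟨v, huv.ne.symm⟩
  rw [if_pos rfl, hv, add_eq_right, Set.ncard_eq_zero] at h0
  exact (h0 ▸ hw : w ∈ (∅ : Set _))

lemma ncard_treesWithEdge_adj {d : V → ℕ} (hdℓ : d ℓ = 1) {m i j : ({ℓ}ᶜ : Set V)}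
    (hdm : 1 ≤ d m) :
    {T ∈ treesWithEdge d i j | T.Adj ℓ m}.ncard =
      (treesWithEdge (leafRemovedDegrees d m) i j).ncard := by
  have leaf {T : SimpleGraph V} (hdeg : T.HasDegrees d) (hℓm : T.Adj ℓ m) :
      T.neighborSet ℓ = {↑m} :=
    neighborSet_eq_singleton_of_ncard_eq_one ((hdeg ℓ).trans hdℓ) hℓm
  refine Set.ncard_congr (fun T _ => T.induce {ℓ}ᶜ) ?_ ?_ ?_
  · rintro T ⟨⟨hT, hdeg, hij⟩, hℓm⟩
    have hℓ := leaf hdeg hℓm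
    exact ⟨(isTree_iff_isTree_induce hℓ).1 hT, (hasDegrees_iff_induce hℓ hdℓ hdm).1 hdeg, hij⟩
  · rintro T₁ T₂ ⟨⟨-, hdeg₁, -⟩, h₁⟩ ⟨⟨-, hdeg₂, -⟩, h₂⟩ h
    rw [← addLeaf_induce (leaf hdeg₁ h₁), ← addLeaf_induce (leaf hdeg₂ h₂), h]
  · rintro T' ⟨hT', hdeg', hij'⟩
    have hℓ := neighborSet_addLeaf T' m.2
    refine ⟨addLeaf T' m, ⟨⟨?_, ?_, ?_⟩, hℓ.symm.subset rfl⟩, induce_addLeaf T' m⟩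
    · rwa [isTree_iff_isTree_induce hℓ, induce_addLeaf]
    · rwa [hasDegrees_iff_induce hℓ hdℓ hdm, induce_addLeaf]
    · exact addLeaf_adj.2 (.inl ⟨i.2, j.2, hij'⟩)

lemma ncard_eq_sum_ncard_adj {S : Set (SimpleGraph V)}
    (hS : ∀ T ∈ S, (T.neighborSet ℓ).ncard = 1) :
    S.ncard = ∑ m : ({ℓ}ᶜ : Set V), {T ∈ S | T.Adj ℓ m}.ncard := by
  have hcover : S = ⋃ m : ({ℓ}ᶜ : Set V), {T ∈ S | T.Adj ℓ m} := by
    refine (Set.iUnion_subset fun m => Set.sep_subset _ _).antisymm' fun T hT => ?_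
    obtain ⟨a, ha⟩ := Set.ncard_eq_one.1 (hS T hT)
    have hadj : T.Adj ℓ a := ha.symm.subset rfl
    exact Set.mem_iUnion.2 ⟨⟨a, hadj.ne.symm⟩, hT, hadj⟩
  rw [← finsum_eq_sum_of_fintype, ← Set.ncard_iUnion_of_finite (fun _ => Set.toFinite _),
    ← hcover]
  rintro m₁ m₂ hne
  refine Set.disjoint_left.2 fun T ⟨hT, h₁⟩ ⟨_, h₂⟩ => hne (Subtype.ext ?_)
  obtain ⟨a, ha⟩ := Set.ncard_eq_one.1 (hS T hT)
  exact (ha.subset h₁).trans (ha.subset h₂).symm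

lemma ncard_treesWithEdge_mul_prod_eq_sum (hV : 3 ≤ Fintype.card V) {d : V → ℕ}
    (hd : ∀ v, 1 ≤ d v) (hdℓ : d ℓ = 1) (i j : ({ℓ}ᶜ : Set V)) :
    (treesWithEdge d i j).ncard * ∏ k, (d k - 1)! =
      ∑ m : ({ℓ}ᶜ : Set V), (d m - 1) *
        ((treesWithEdge (leafRemovedDegrees d m) i j).ncard *
          ∏ k, (leafRemovedDegrees d m k - 1)!) := by
  rw [ncard_eq_sum_ncard_adj fun T hT => (hT.2.1 ℓ).trans hdℓ, Finset.sum_mul]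
  refine Finset.sum_congr rfl fun m _ => ?_
  rcases (hd m).eq_or_lt with hm | hm
  · have hempty : {T ∈ treesWithEdge d i j | T.Adj ℓ m} = ∅ :=
      Set.eq_empty_of_forall_notMem fun T ⟨⟨hT, hdeg, _⟩, hℓm⟩ =>
        hT.not_adj_of_ncard_neighborSet_eq_one hV ((hdeg ℓ).trans hdℓ)
          ((hdeg m).trans hm.symm) hℓm
    simp [hempty, ← hm]
  · have hprod : ∏ k : ({ℓ}ᶜ : Set V), (d k - 1)! =
        (d m - 1) * ∏ k, (leafRemovedDegrees d m k - 1)! :=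
      prod_factorial_pred_update (e := fun x : ({ℓ}ᶜ : Set V) => d x) hm
    rw [ncard_treesWithEdge_adj hdℓ (hd m), Fintype.prod_eq_mul_prod_compl_singleton _ ℓ, hdℓ,
      Nat.sub_self, Nat.factorial_zero, one_mul, hprod]
    ring

lemma treesWithEdge_eq_empty (hV : 3 ≤ Fintype.card V) {d : V → ℕ} {i j : V} (hi : d i = 1)
    (hj : d j = 1) : treesWithEdge d i j = ∅ :=
  Set.eq_empty_of_forall_notMem fun _ ⟨hT, hdeg, hadj⟩ =>
    hT.not_adj_of_ncard_neighborSet_eq_one hV ((hdeg i).trans hi) ((hdeg j).trans hj) hadj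

lemma sum_leafRemovedDegrees_of_card_eq_three (hV : Fintype.card V = 3) {d : V → ℕ}
    (hd : IsTreeDegreeSeq d) (hdℓ : d ℓ = 1) {i j : ({ℓ}ᶜ : Set V)} (hij : i ≠ j) :
    ∑ m : ({ℓ}ᶜ : Set V), (d m - 1) *
        ((treesWithEdge (leafRemovedDegrees d m) i j).ncard *
          ∏ k, (leafRemovedDegrees d m k - 1)!) = d i + d j - 2 := by
  have hterm (m : ({ℓ}ᶜ : Set V)) :
      (d m - 1) * ((treesWithEdge (leafRemovedDegrees d m) i j).ncard *
        ∏ k, (leafRemovedDegrees d m k - 1)!) = d m - 1 := by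
    rcases (hd.1 m).eq_or_lt with hm | hm
    · simp [← hm]
    · rw [ncard_treesWithEdge_mul_prod_of_card_eq_two (by rw [Fintype.card_compl_singleton]; omega)
        (isTreeDegreeSeq_leafRemovedDegrees hd hdℓ hm) hij, mul_one]
  have huniv : ({i, j} : Finset ({ℓ}ᶜ : Set V)) = Finset.univ :=
    Finset.eq_univ_of_card _ (by rw [Finset.card_pair hij, Fintype.card_compl_singleton]; omega)
  have hpair : ∑ x : ({ℓ}ᶜ : Set V), d x = d i + d j := by
    rw [← huniv, Finset.sum_pair hij]
  have := hd.sum_compl_singleton hdℓ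
  rw [Finset.sum_congr rfl fun m _ => hterm m, hd.sum_tsub_one_compl_singleton hdℓ]
  omega

theorem ncard_treesWithEdge_mul_prod_factorial (hV : 3 ≤ Fintype.card V) {d : V → ℕ}
    (hd : IsTreeDegreeSeq d) {i j : V} (hij : i ≠ j) :
    (treesWithEdge d i j).ncard * ∏ k, (d k - 1)! = (d i + d j - 2) * (Fintype.card V - 3)! := by
  induction hN : Fintype.card V using Nat.strong_induction_on generalizing V with
  | _ N ih =>
  rcases le_or_gt (d i + d j) 2 with hle | hgt
  · have := hd.1 i
    have := hd.1 j
    rw [treesWithEdge_eq_empty hV (by omega) (by omega), show d i + d j - 2 = 0 by omega]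
    simp
  obtain ⟨ℓ, hℓi, hℓj, hdℓ⟩ := hd.exists_ne_ne_eq_one hij hgt
  lift i to ({ℓ}ᶜ : Set V) using hℓi.symm
  lift j to ({ℓ}ᶜ : Set V) using hℓj.symm
  replace hij : i ≠ j := fun h => hij (congrArg Subtype.val h)
  have hW := Fintype.card_compl_singleton ℓ
  rw [ncard_treesWithEdge_mul_prod_eq_sum hV hd.1 hdℓ i j]
  rcases (show N = 3 ∨ 4 ≤ N by omega) with rfl | hN4
  · rw [sum_leafRemovedDegrees_of_card_eq_three hN hd hdℓ hij, Nat.sub_self, Nat.factorial_zero,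
      mul_one]
  · have hterm (m : ({ℓ}ᶜ : Set V)) :
        (d m - 1) * ((treesWithEdge (leafRemovedDegrees d m) i j).ncard *
          ∏ k, (leafRemovedDegrees d m k - 1)!) =
        (d m - 1) * (leafRemovedDegrees d m i + leafRemovedDegrees d m j - 2) * (N - 4)! := by
      rcases (hd.1 m).eq_or_lt with hm | hm
      · simp [← hm]
      · rw [ih (N - 1) (by omega) (by omega) (isTreeDegreeSeq_leafRemovedDegrees hd hdℓ hm) hij
          (by omega), mul_assoc, show N - 1 - 3 = N - 4 by omega]
    have hsum : ∑ m : ({ℓ}ᶜ : Set V),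
        (d m - 1) * (leafRemovedDegrees d m i + leafRemovedDegrees d m j - 2) +
          (d i + d j - 2) = (d i + d j - 2) * ∑ m : ({ℓ}ᶜ : Set V), (d m - 1) :=
      sum_mul_update_add (e := fun x : ({ℓ}ᶜ : Set V) => d x) (fun x => hd.1 x) hij
    rw [hd.sum_tsub_one_compl_singleton hdℓ, hN, show N - 2 = N - 3 + 1 by omega, mul_add_one,
      add_left_inj] at hsum
    rw [Finset.sum_congr rfl fun m _ => hterm m, ← Finset.sum_mul, hsum, mul_assoc,
      show N - 4 = N - 3 - 1 by omega, Nat.mul_factorial_pred (by omega)]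

end Fintype

end SimpleGraph

theorem tree_count_with_fixed_edge (n : ℕ) (hn : 3 ≤ n) (d : Fin n → ℕ)
    (hd : isTreeSeq d) (i j : Fin n) (hij : i ≠ j) :
    {T : SimpleGraph (Fin n) | T.IsTree ∧ realizes T d ∧ T.Adj i j}.ncard *
        ∏ k, Nat.factorial (d k - 1) =
      (d i + d j - 2) * Nat.factorial (n - 3) := by
  have h := SimpleGraph.ncard_treesWithEdge_mul_prod_factorial (V := Fin n) (by simpa using hn)
    ⟨hd.1, by simpa using hd.2⟩ hij
  rwa [Fintype.card_fin] at h
end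

section
/- Degree sequences D = (d_1,...,d_n) and F = (f_1,...,f_n) have edge-disjoint realizations if and only if D' = (d_1+1,...,d_n+1, n) and F' = (f_1,...,f_n, 0) have edge-disjoint realizations on n+1 vertices. -/
/-!
A graph on `Fin (n + 1)` is the same as a graph `G` on `Fin n` together with the neighbourhood
`S ⊆ Fin n` of the last vertex, and adding the last vertex raises the degree of `i` by one exactly
when `i ∈ S`. Degree `n` for the last vertex forces `S = univ`, degree `0` forces `S = ∅`, and the
two extended graphs are edge-disjoint iff the original graphs are and the neighbourhoods are.
-/

lemma Fin.ncard_eq_ncard_preimage_castSucc_add {n : ℕ} (s : Set (Fin (n + 1))) :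
    s.ncard = (Fin.castSucc ⁻¹' s).ncard + s.indicator 1 (Fin.last n) := by
  have himage : Fin.castSucc '' (Fin.castSucc ⁻¹' s) = s \ {Fin.last n} := by
    ext i
    induction i using Fin.lastCases <;> simp [Fin.castSucc_ne_last]
  rw [← Set.ncard_image_of_injective _ (Fin.castSucc_injective n), himage]
  by_cases h : Fin.last n ∈ s
  · rw [Set.indicator_of_mem h, Pi.one_apply, Set.ncard_sdiff_singleton_add_one h]
  · rw [Set.indicator_of_notMem h, Set.sdiff_singleton_eq_self h, add_zero]

namespace SimpleGraph

variable {n : ℕ}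

def snoc (G : SimpleGraph (Fin n)) (S : Set (Fin n)) : SimpleGraph (Fin (n + 1)) where
  Adj u v := Fin.lastCases (motive := fun _ => Prop)
    (Fin.lastCases (motive := fun _ => Prop) False (· ∈ S) v)
    (fun i => Fin.lastCases (motive := fun _ => Prop) (i ∈ S) (G.Adj i) v) u
  symm := ⟨fun u v => by
    induction u using Fin.lastCases <;> induction v using Fin.lastCases <;> simp [G.adj_comm]⟩
  loopless := ⟨fun u => by induction u using Fin.lastCases <;> simp⟩

variable {G H : SimpleGraph (Fin n)} {S T : Set (Fin n)} {i j : Fin n}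

@[simp] lemma snoc_adj_castSucc_castSucc : (G.snoc S).Adj i.castSucc j.castSucc ↔ G.Adj i j := by
  simp [snoc]

@[simp] lemma snoc_adj_castSucc_last : (G.snoc S).Adj i.castSucc (Fin.last n) ↔ i ∈ S := by
  simp [snoc]

@[simp] lemma snoc_adj_last_castSucc : (G.snoc S).Adj (Fin.last n) i.castSucc ↔ i ∈ S := by
  simp [snoc]

@[simp] lemma not_snoc_adj_last_last : ¬ (G.snoc S).Adj (Fin.last n) (Fin.last n) := by
  simp [snoc]

lemma exists_eq_snoc (G' : SimpleGraph (Fin (n + 1))) : ∃ G S, G' = snoc G S := by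
  refine ⟨G'.comap Fin.castSucc, {i | G'.Adj i.castSucc (Fin.last n)}, ?_⟩
  ext u v
  induction u using Fin.lastCases <;> induction v using Fin.lastCases <;> simp [G'.adj_comm]

lemma ncard_neighborSet_snoc_castSucc :
    ((G.snoc S).neighborSet i.castSucc).ncard = (G.neighborSet i).ncard + S.indicator 1 i := by
  rw [Fin.ncard_eq_ncard_preimage_castSucc_add]
  by_cases hi : i ∈ S <;> simp [neighborSet, hi]

lemma ncard_neighborSet_snoc_last : ((G.snoc S).neighborSet (Fin.last n)).ncard = S.ncard := by
  rw [Fin.ncard_eq_ncard_preimage_castSucc_add]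
  simp [neighborSet]

lemma disjoint_snoc_iff : Disjoint (G.snoc S) (H.snoc T) ↔ Disjoint G H ∧ Disjoint S T := by
  simp only [disjoint_left, Set.disjoint_left, Fin.forall_fin_succ', snoc_adj_castSucc_castSucc,
    snoc_adj_castSucc_last, snoc_adj_last_castSucc, not_snoc_adj_last_last, forall_and]
  tauto

end SimpleGraph

open SimpleGraph

lemma realizes_iff {n : ℕ} {G : SimpleGraph (Fin n)} {d : Fin n → ℕ} :
    realizes G d ↔ ∀ v, (G.neighborSet v).ncard = d v := Iff.rfl

lemma realizes_snoc_iff {n : ℕ} {G : SimpleGraph (Fin n)} {S : Set (Fin n)} {d : Fin n → ℕ}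
    {k : ℕ} : realizes (G.snoc S) (Fin.snoc d k) ↔
      (∀ i, (G.neighborSet i).ncard + S.indicator 1 i = d i) ∧ S.ncard = k := by
  simp only [realizes_iff, Fin.forall_fin_succ', Fin.snoc_castSucc, Fin.snoc_last,
    ncard_neighborSet_snoc_castSucc, ncard_neighborSet_snoc_last]

theorem packing_add_dominating_vertex (n : ℕ) (D F : Fin n → ℕ) :
    (∃ G H : SimpleGraph (Fin n),
        realizes G D ∧ realizes H F ∧ Disjoint G.edgeSet H.edgeSet) ↔
    (∃ G' H' : SimpleGraph (Fin (n + 1)),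
        realizes G' (Fin.snoc (fun i => D i + 1) n) ∧
        realizes H' (Fin.snoc F 0) ∧
        Disjoint G'.edgeSet H'.edgeSet) := by
  simp only [disjoint_edgeSet]
  constructor
  · rintro ⟨G, H, hG, hH, hGH⟩
    rw [realizes_iff] at hG hH
    exact ⟨G.snoc .univ, H.snoc ∅, realizes_snoc_iff.2 ⟨fun i => by simp [hG i], by simp⟩,
      realizes_snoc_iff.2 ⟨fun i => by simp [hH i], by simp⟩,
      disjoint_snoc_iff.2 ⟨hGH, Set.disjoint_empty _⟩⟩
  · rintro ⟨G', H', hG', hH', hGH'⟩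
    obtain ⟨G, S, rfl⟩ := exists_eq_snoc G'
    obtain ⟨H, T, rfl⟩ := exists_eq_snoc H'
    obtain ⟨hG, hS⟩ := realizes_snoc_iff.1 hG'
    obtain ⟨hH, hT⟩ := realizes_snoc_iff.1 hH'
    obtain rfl : S = .univ := (Set.eq_univ_iff_ncard S).2 (by simpa using hS)
    obtain rfl : T = ∅ := (Set.ncard_eq_zero).1 hT
    exact ⟨G, H, realizes_iff.2 fun i => by simpa using hG i,
      realizes_iff.2 fun i => by simpa using hH i,
      (disjoint_snoc_iff.1 hGH').1⟩
end

section
/- Degree sequences D = (d_1,...,d_n) and F = (f_1,...,f_n) have edge-disjoint realizations if and only if D' = (d_1,...,d_n, 1, 1) and F' = (f_1+1,...,f_n+1, n, 0) have edge-disjoint realizations on n+2 vertices. -/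
/-!
Given `G, H` on `v_1, …, v_n`, add the edge `v_{n+1} v_{n+2}` to `G` and the star from `v_{n+1}`
to `v_1, …, v_n` to `H`. Conversely, `v_{n+2}` is isolated in `H'`, so `v_{n+1}`, of `H'`-degree
`n`, is joined in `H'` to exactly `v_1, …, v_n`. Edge-disjointness then forces the unique
`G'`-neighbour of `v_{n+1}` to be `v_{n+2}`, so neither new vertex has a `G'`-neighbour among the
old ones, and restricting `G'` and `H'` to `v_1, …, v_n` keeps the `G'`-degrees and lowers the
`H'`-degrees by one.
-/

namespace SimpleGraph

variable {V W : Type*}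

lemma ncard_neighborSet_comap_add_ncard_sdiff [Finite W] (G : SimpleGraph W) (f : V ↪ W)
    (v : V) :
    ((G.comap f).neighborSet v).ncard + (G.neighborSet (f v) \ Set.range f).ncard =
      (G.neighborSet (f v)).ncard := by
  have : (G.comap f).neighborSet v = f ⁻¹' G.neighborSet (f v) := rfl
  rw [this, ← Set.ncard_image_of_injective _ f.injective, Set.image_preimage_eq_inter_range,
    Set.ncard_inter_add_ncard_sdiff_eq_ncard]

lemma ncard_neighborSet_map (G : SimpleGraph V) (f : V ↪ W) (v : V) :
    ((G.map f).neighborSet (f v)).ncard = (G.neighborSet v).ncard := by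
  rw [neighborSet_map, Set.ncard_image_of_injective _ f.injective]

lemma neighborSet_map_eq_empty (G : SimpleGraph V) {f : V ↪ W} {w : W} (hw : w ∉ Set.range f) :
    (G.map f).neighborSet w = ∅ := by
  ext u
  simp only [mem_neighborSet, map_adj, Set.mem_empty_iff_false, iff_false]
  rintro ⟨a, b, -, rfl, -⟩
  exact hw ⟨a, rfl⟩

lemma disjoint_map {G H : SimpleGraph V} (f : V ↪ W) (h : Disjoint G H) :
    Disjoint (G.map f) (H.map f) := by
  rw [disjoint_left]
  rintro _ _ ⟨-, a, b, hab, rfl, rfl⟩ hH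
  exact disjoint_left.1 h a b hab (map_adj_apply.1 hH)

lemma disjoint_comap {G H : SimpleGraph W} (f : V → W) (h : Disjoint G H) :
    Disjoint (G.comap f) (H.comap f) :=
  disjoint_left.2 fun x y => disjoint_left.1 h (f x) (f y)

lemma neighborSet_eq_singleton_of_ncard_eq_one_s19 {G : SimpleGraph V} {v w : V}
    (hv : (G.neighborSet v).ncard = 1) (hw : G.Adj v w) : G.neighborSet v = {w} := by
  obtain ⟨u, hu⟩ := Set.ncard_eq_one.1 hv
  have hwu : w ∈ ({u} : Set V) := by rw [← hu]; exact hw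
  rwa [Set.mem_singleton_iff.1 hwu]

def starGraphOn (c : V) (S : Set V) : SimpleGraph V :=
  fromRel fun x y => x = c ∧ y ∈ S

variable {c v : V} {S T : Set V}

lemma starGraphOn_adj {x y : V} :
    (starGraphOn c S).Adj x y ↔ x ≠ y ∧ (x = c ∧ y ∈ S ∨ y = c ∧ x ∈ S) :=
  fromRel_adj _ _ _

lemma neighborSet_starGraphOn_center (hc : c ∉ S) : (starGraphOn c S).neighborSet c = S := by
  ext u
  simp only [mem_neighborSet, starGraphOn_adj, true_and]
  constructor
  · rintro ⟨-, hu | ⟨rfl, hu⟩⟩ <;> assumption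
  · intro hu
    exact ⟨fun h => hc (h ▸ hu), Or.inl hu⟩

lemma neighborSet_starGraphOn_of_mem (hc : c ∉ S) (hv : v ∈ S) :
    (starGraphOn c S).neighborSet v = {c} := by
  ext u
  simp only [mem_neighborSet, starGraphOn_adj, Set.mem_singleton_iff]
  constructor
  · rintro ⟨-, ⟨rfl, -⟩ | ⟨rfl, -⟩⟩
    · exact absurd hv hc
    · rfl
  · rintro rfl
    exact ⟨fun h => hc (h ▸ hv), Or.inr ⟨rfl, hv⟩⟩

lemma neighborSet_starGraphOn_of_notMem (hvc : v ≠ c) (hv : v ∉ S) :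
    (starGraphOn c S).neighborSet v = ∅ := by
  ext u
  simp only [mem_neighborSet, starGraphOn_adj, Set.mem_empty_iff_false, iff_false]
  tauto

lemma disjoint_map_starGraphOn (G : SimpleGraph W) {f : W ↪ V} (hc : c ∉ Set.range f) :
    Disjoint (G.map f) (starGraphOn c S) := by
  rw [disjoint_left]
  rintro _ _ ⟨-, a, b, -, rfl, rfl⟩ h
  obtain ⟨-, ⟨ha, -⟩ | ⟨hb, -⟩⟩ := starGraphOn_adj.1 h
  · exact hc ⟨a, ha⟩
  · exact hc ⟨b, hb⟩

lemma disjoint_starGraphOn (h : Disjoint S T) : Disjoint (starGraphOn c S) (starGraphOn c T) := by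
  rw [disjoint_left]
  intro x y hS hT
  rw [starGraphOn_adj] at hS hT
  grind

end SimpleGraph

open SimpleGraph

section ExtendByTwo

variable {n : ℕ}

-- `oldVertex i`, `apex` and `pendant` are the paper's `v_{i+1}`, `v_{n+1}` and `v_{n+2}`.
def oldVertex : Fin n ↪ Fin (n + 2) := Fin.castSuccEmb.trans Fin.castSuccEmb

def apex : Fin (n + 2) := (Fin.last n).castSucc

def pendant : Fin (n + 2) := Fin.last (n + 1)

lemma apex_ne_pendant : (apex : Fin (n + 2)) ≠ pendant := by
  simp [apex, pendant, Fin.ext_iff]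

lemma range_oldVertex : Set.range (oldVertex (n := n)) = {apex, pendant}ᶜ := by
  ext u
  simp only [Set.mem_range, Set.mem_compl_iff, Set.mem_insert_iff, Set.mem_singleton_iff,
    oldVertex, apex, pendant, Function.Embedding.trans_apply, Fin.castSuccEmb_apply, Fin.ext_iff,
    Fin.val_castSucc, Fin.val_last]
  constructor
  · rintro ⟨i, hi⟩
    omega
  · intro h
    exact ⟨⟨u, by omega⟩, rfl⟩

lemma apex_notMem_range_oldVertex : apex ∉ Set.range (oldVertex (n := n)) := by
  simp [range_oldVertex]

lemma pendant_notMem_range_oldVertex : pendant ∉ Set.range (oldVertex (n := n)) := by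
  simp [range_oldVertex]

lemma oldVertex_ne_apex (i : Fin n) : oldVertex i ≠ apex :=
  fun h => apex_notMem_range_oldVertex ⟨i, h⟩

lemma oldVertex_ne_pendant (i : Fin n) : oldVertex i ≠ pendant :=
  fun h => pendant_notMem_range_oldVertex ⟨i, h⟩

lemma ncard_range_oldVertex : (Set.range (oldVertex (n := n))).ncard = n := by
  rw [Set.ncard_range_of_injective oldVertex.injective, Nat.card_eq_fintype_card, Fintype.card_fin]

lemma realizes_snoc_snoc_iff {G : SimpleGraph (Fin (n + 2))} {d : Fin n → ℕ} {x y : ℕ} :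
    realizes G (Fin.snoc (Fin.snoc d x) y) ↔
      (∀ i, (G.neighborSet (oldVertex i)).ncard = d i) ∧
        (G.neighborSet apex).ncard = x ∧ (G.neighborSet pendant).ncard = y := by
  simp only [realizes, Fin.forall_fin_succ', Fin.snoc_castSucc, Fin.snoc_last, and_assoc]
  rfl

lemma realizes_map_sup_starGraphOn_pendant {G : SimpleGraph (Fin n)} {d : Fin n → ℕ}
    (hG : realizes G d) :
    realizes (G.map oldVertex ⊔ starGraphOn apex {pendant}) (Fin.snoc (Fin.snoc d 1) 1) := by
  have hapex : apex ∉ ({pendant} : Set (Fin (n + 2))) := apex_ne_pendant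
  refine realizes_snoc_snoc_iff.2 ⟨fun i => ?_, ?_, ?_⟩
  · rw [neighborSet_sup, neighborSet_starGraphOn_of_notMem (oldVertex_ne_apex i)
      (oldVertex_ne_pendant i), Set.union_empty, ncard_neighborSet_map]
    exact hG i
  · rw [neighborSet_sup, neighborSet_map_eq_empty _ apex_notMem_range_oldVertex,
      neighborSet_starGraphOn_center hapex, Set.empty_union, Set.ncard_singleton]
  · rw [neighborSet_sup, neighborSet_map_eq_empty _ pendant_notMem_range_oldVertex,
      neighborSet_starGraphOn_of_mem hapex rfl, Set.empty_union, Set.ncard_singleton]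

lemma realizes_map_sup_starGraphOn_range {H : SimpleGraph (Fin n)} {f : Fin n → ℕ}
    (hH : realizes H f) :
    realizes (H.map oldVertex ⊔ starGraphOn apex (Set.range oldVertex))
      (Fin.snoc (Fin.snoc (fun i => f i + 1) n) 0) := by
  refine realizes_snoc_snoc_iff.2 ⟨fun i => ?_, ?_, ?_⟩
  · have hapex : apex ∉ oldVertex '' H.neighborSet i :=
      fun h => apex_notMem_range_oldVertex (Set.image_subset_range _ _ h)
    rw [neighborSet_sup, neighborSet_map, neighborSet_starGraphOn_of_mem
      apex_notMem_range_oldVertex ⟨i, rfl⟩, Set.union_singleton, Set.ncard_insert_of_notMem hapex,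
      Set.ncard_image_of_injective _ oldVertex.injective]
    exact congrArg (· + 1) (hH i)
  · rw [neighborSet_sup, neighborSet_map_eq_empty _ apex_notMem_range_oldVertex,
      neighborSet_starGraphOn_center apex_notMem_range_oldVertex, Set.empty_union,
      ncard_range_oldVertex]
  · rw [neighborSet_sup, neighborSet_map_eq_empty _ pendant_notMem_range_oldVertex,
      neighborSet_starGraphOn_of_notMem apex_ne_pendant.symm pendant_notMem_range_oldVertex,
      Set.empty_union, Set.ncard_empty]

lemma disjoint_map_sup_starGraphOn {G H : SimpleGraph (Fin n)} (h : Disjoint G H) :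
    Disjoint (G.map oldVertex ⊔ starGraphOn apex {pendant})
      (H.map oldVertex ⊔ starGraphOn apex (Set.range oldVertex)) :=
  disjoint_sup_left.2
    ⟨disjoint_sup_right.2 ⟨disjoint_map _ h, disjoint_map_starGraphOn _ apex_notMem_range_oldVertex⟩,
      disjoint_sup_right.2 ⟨(disjoint_map_starGraphOn _ apex_notMem_range_oldVertex).symm,
        disjoint_starGraphOn (Set.disjoint_singleton_left.2 pendant_notMem_range_oldVertex)⟩⟩

lemma not_adj_pendant {H : SimpleGraph (Fin (n + 2))} {f : Fin n → ℕ} {x : ℕ}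
    (hH : realizes H (Fin.snoc (Fin.snoc f x) 0)) (u : Fin (n + 2)) : ¬H.Adj u pendant := by
  have hpendant := (realizes_snoc_snoc_iff.1 hH).2.2
  rw [Set.ncard_eq_zero] at hpendant
  exact fun h => Set.eq_empty_iff_forall_notMem.1 hpendant u h.symm

lemma neighborSet_apex_eq_range {H : SimpleGraph (Fin (n + 2))} {f : Fin n → ℕ}
    (hH : realizes H (Fin.snoc (Fin.snoc f n) 0)) :
    H.neighborSet apex = Set.range oldVertex := by
  have hapex := (realizes_snoc_snoc_iff.1 hH).2.1
  have hsub : H.neighborSet apex ⊆ Set.range oldVertex := by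
    rw [range_oldVertex]
    rintro u hu (rfl | rfl)
    · exact H.irrefl hu
    · exact not_adj_pendant hH apex hu
  exact Set.eq_of_subset_of_ncard_le hsub (by rw [ncard_range_oldVertex, hapex])

lemma realizes_comap_oldVertex_of_realizes_snoc_snoc_zero {H : SimpleGraph (Fin (n + 2))}
    {f : Fin n → ℕ} (hH : realizes H (Fin.snoc (Fin.snoc (fun i => f i + 1) n) 0)) :
    realizes (H.comap oldVertex) f := by
  have hold := (realizes_snoc_snoc_iff.1 hH).1
  intro i
  have hapex : apex ∈ H.neighborSet (oldVertex i) := by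
    have : oldVertex i ∈ H.neighborSet apex := by
      rw [neighborSet_apex_eq_range hH]
      exact ⟨i, rfl⟩
    exact this.symm
  have hpendant : H.neighborSet (oldVertex i) ∩ {pendant} = ∅ :=
    Set.inter_singleton_eq_empty.2 (not_adj_pendant hH (oldVertex i))
  have hcount := ncard_neighborSet_comap_add_ncard_sdiff H oldVertex i
  rw [range_oldVertex, Set.sdiff_compl, Set.inter_insert_of_mem hapex, hpendant,
    insert_empty_eq, Set.ncard_singleton, hold i] at hcount
  exact Nat.add_right_cancel hcount

lemma neighborSet_apex_eq_singleton_pendant {G H : SimpleGraph (Fin (n + 2))}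
    (hG : (G.neighborSet apex).ncard = 1) (hH : H.neighborSet apex = Set.range oldVertex)
    (hGH : Disjoint G H) : G.neighborSet apex = {pendant} := by
  obtain ⟨w, hw⟩ := Set.ncard_eq_one.1 hG
  have hadj : G.Adj apex w := by rw [← mem_neighborSet, hw]; rfl
  suffices w = pendant from this ▸ hw
  by_contra hne
  have hw_old : w ∈ Set.range oldVertex := by
    rw [range_oldVertex]
    rintro (h | h)
    exacts [G.ne_of_adj hadj h.symm, hne h]
  rw [← hH] at hw_old
  exact disjoint_left.1 hGH _ _ hadj hw_old

lemma realizes_comap_oldVertex_of_realizes_snoc_snoc_one {G : SimpleGraph (Fin (n + 2))}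
    {d : Fin n → ℕ} (hG : realizes G (Fin.snoc (Fin.snoc d 1) 1))
    (hapex : G.neighborSet apex = {pendant}) : realizes (G.comap oldVertex) d := by
  obtain ⟨hold, -, hdeg_pendant⟩ := realizes_snoc_snoc_iff.1 hG
  have hadj : G.Adj apex pendant := by rw [← mem_neighborSet, hapex]; rfl
  have hpendant : G.neighborSet pendant = {apex} :=
    neighborSet_eq_singleton_of_ncard_eq_one_s19 hdeg_pendant hadj.symm
  intro i
  have hsdiff : G.neighborSet (oldVertex i) \ Set.range oldVertex = ∅ := by
    rw [range_oldVertex, Set.sdiff_compl, Set.inter_insert_of_notMem, Set.inter_singleton_eq_empty]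
    · intro h
      have : oldVertex i ∈ G.neighborSet pendant := h.symm
      exact oldVertex_ne_apex i (by rwa [hpendant] at this)
    · intro h
      have : oldVertex i ∈ G.neighborSet apex := h.symm
      exact oldVertex_ne_pendant i (by rwa [hapex] at this)
  have hcount := ncard_neighborSet_comap_add_ncard_sdiff G oldVertex i
  rw [hsdiff, Set.ncard_empty, add_zero, hold i] at hcount
  exact hcount

end ExtendByTwo

theorem packing_add_two_vertices (n : ℕ) (D F : Fin n → ℕ) :
    (∃ G H : SimpleGraph (Fin n),
        realizes G D ∧ realizes H F ∧ Disjoint G.edgeSet H.edgeSet) ↔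
    (∃ G' H' : SimpleGraph (Fin (n + 2)),
        realizes G' (Fin.snoc (Fin.snoc D 1) 1) ∧
        realizes H' (Fin.snoc (Fin.snoc (fun i => F i + 1) n) 0) ∧
        Disjoint G'.edgeSet H'.edgeSet) := by
  simp only [disjoint_edgeSet]
  constructor
  · rintro ⟨G, H, hG, hH, hGH⟩
    exact ⟨_, _, realizes_map_sup_starGraphOn_pendant hG, realizes_map_sup_starGraphOn_range hH,
      disjoint_map_sup_starGraphOn hGH⟩
  · rintro ⟨G', H', hG', hH', hGH'⟩
    have hapex : G'.neighborSet apex = {pendant} :=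
      neighborSet_apex_eq_singleton_pendant (realizes_snoc_snoc_iff.1 hG').2.1
        (neighborSet_apex_eq_range hH') hGH'
    exact ⟨_, _, realizes_comap_oldVertex_of_realizes_snoc_snoc_one hG' hapex,
      realizes_comap_oldVertex_of_realizes_snoc_snoc_zero hH', disjoint_comap _ hGH'⟩
end
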